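/- arXiv:1002.0619 — 9 statements merged into one kernel-verified Lean document; each statement's English description precedes it below -/
import Mathlib

section
/- Let p be an odd prime and a, b, m integers mod p with m a nonzero quadratic residue mod p and a² - m·b² a nonzero quadratic residue mod p. If α and β are the two square roots of m mod p, then the Legendre symbol ((a + b·α)/p) equals ((a + b·β)/p). Hence the symbol ((a + b·√m)/p) is well defined. -/
/-!
Either `β = α`, or `β = -α` and then `(a + bα)(a + bβ) = a² - m b²` is a nonzero square, so the
two symbols are `±1` with product `1` and hence coincide.
-/

theorem quadraticChar_eq_of_quadraticChar_mul_eq_one {F : Type*} [Field F] [Fintype F]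
    [DecidableEq F] {x y : F} (h : quadraticChar F (x * y) = 1) :
    quadraticChar F x = quadraticChar F y := by
  have hx : x ≠ 0 := by
    rintro rfl
    simp at h
  calc quadraticChar F x
      = quadraticChar F x * quadraticChar F (x * y) := by rw [h, mul_one]
    _ = quadraticChar F x ^ 2 * quadraticChar F y := by rw [map_mul]; ring
    _ = quadraticChar F y := by rw [quadraticChar_sq_one hx, one_mul]

theorem legendre_symbol_sqrt_well_defined_general (p : ℕ) [Fact p.Prime]
    (a b m : ZMod p)
    (hab : quadraticChar (ZMod p) (a ^ 2 - m * b ^ 2) = 1)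
    (α β : ZMod p) (hα : α ^ 2 = m) (hβ : β ^ 2 = m) :
    quadraticChar (ZMod p) (a + b * α) = quadraticChar (ZMod p) (a + b * β) := by
  obtain rfl | rfl := sq_eq_sq_iff_eq_or_eq_neg.mp (hα.trans hβ.symm)
  · rfl
  · apply quadraticChar_eq_of_quadraticChar_mul_eq_one
    rw [← hab, ← hβ]
    congr 1
    ring

/-- For an odd prime `p` and `a b m : ZMod p` with `m` a nonzero quadratic
residue and `a² - m b²` a nonzero quadratic residue, the Legendre symbol (computed via the
quadratic character) of `a + b·α` is independent of the choice of square root `α` of `m`. -/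
theorem legendre_symbol_sqrt_well_defined (p : ℕ) [Fact p.Prime] (hp : p ≠ 2)
    (a b m : ZMod p)
    (hm : quadraticChar (ZMod p) m = 1)
    (hab : quadraticChar (ZMod p) (a ^ 2 - m * b ^ 2) = 1)
    (α β : ZMod p) (hα : α ^ 2 = m) (hβ : β ^ 2 = m) :
    quadraticChar (ZMod p) (a + b * α) = quadraticChar (ZMod p) (a + b * β) :=
  legendre_symbol_sqrt_well_defined_general p a b m hab α β hα hβ
end

section
/- Let V be a vector space over ℤ/2ℤ. Let S³(V) be the degree-3 component of the symmetric algebra and S'³(V) = T³(V)/⟨A⊗B⊗C − B⊗C⊗A⟩ the quotient of the degree-3 tensor power by cyclic permutations. Define τ : S³(V) → S'³(V) by A∙B∙C ↦ A⊙B⊙C + B⊙A⊙C and ρ : S'³(V) → S³(V) by A⊙B⊙C ↦ A∙B∙C. Then τ and ρ are well-defined linear maps, ρ is surjective, and ker ρ = im τ; i.e., the sequence S³(V) → S'³(V) → S³(V) → 0 is exact. -/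
open TensorProduct

/-- The degree-3 tensor power `T³(V) = V ⊗ V ⊗ V` over `ℤ/2ℤ`. -/
abbrev T3 (V : Type*) [AddCommGroup V] [Module (ZMod 2) V] :=
  V ⊗[ZMod 2] (V ⊗[ZMod 2] V)

/-- The submodule of relations for cyclic permutations: generated by
`a⊗b⊗c − b⊗c⊗a`.  The quotient is `S'³(V)`. -/
def cycRel (V : Type*) [AddCommGroup V] [Module (ZMod 2) V] : Submodule (ZMod 2) (T3 V) :=
  Submodule.span (ZMod 2)
    {x | ∃ a b c : V, x = a ⊗ₜ[ZMod 2] (b ⊗ₜ[ZMod 2] c) - b ⊗ₜ[ZMod 2] (c ⊗ₜ[ZMod 2] a)}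

/-- The submodule of relations for all permutations (cyclic ones together with the
transposition `a⊗b⊗c − b⊗a⊗c`).  The quotient is `S³(V)`. -/
def symRel (V : Type*) [AddCommGroup V] [Module (ZMod 2) V] : Submodule (ZMod 2) (T3 V) :=
  cycRel V ⊔ Submodule.span (ZMod 2)
    {x | ∃ a b c : V, x = a ⊗ₜ[ZMod 2] (b ⊗ₜ[ZMod 2] c) - b ⊗ₜ[ZMod 2] (a ⊗ₜ[ZMod 2] c)}

/-- `S³(V)`, the degree-3 component of the symmetric algebra. -/
abbrev S3 (V : Type*) [AddCommGroup V] [Module (ZMod 2) V] := T3 V ⧸ symRel V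

/-- `S'³(V) = T³(V)/⟨A⊗B⊗C − B⊗C⊗A⟩`. -/
abbrev S3' (V : Type*) [AddCommGroup V] [Module (ZMod 2) V] := T3 V ⧸ cycRel V

/-- The canonical projection `T³(V) → S³(V)`, `a⊗b⊗c ↦ a∙b∙c`. -/
def mkS (V : Type*) [AddCommGroup V] [Module (ZMod 2) V] : T3 V →ₗ[ZMod 2] S3 V :=
  (symRel V).mkQ

/-- The canonical projection `T³(V) → S'³(V)`, `a⊗b⊗c ↦ a⊙b⊙c`. -/
def mkS' (V : Type*) [AddCommGroup V] [Module (ZMod 2) V] : T3 V →ₗ[ZMod 2] S3' V :=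
  (cycRel V).mkQ

/-!
`ρ` is the projection `T³(V)/cyc → T³(V)/(cyc + swap)`, so its kernel is the image of the
transposition relations `A⊗B⊗C − B⊗A⊗C`. Over `ℤ/2ℤ` such a relation equals `A⊗B⊗C + B⊗A⊗C`,
whose image in `S'³(V)` is `τ(A∙B∙C)`; conversely `ρ(τ(A∙B∙C)) = 2 A∙B∙C = 0`.
-/

open Submodule

section

variable (V : Type*) [AddCommGroup V] [Module (ZMod 2) V]

lemma cycRel_le_symRel : cycRel V ≤ symRel V := le_sup_left

lemma mkS'_tmul_cyclic (a b c : V) :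
    mkS' V (a ⊗ₜ (b ⊗ₜ c)) = mkS' V (b ⊗ₜ (c ⊗ₜ a)) :=
  (Submodule.Quotient.eq _).2 (subset_span ⟨a, b, c, rfl⟩)

lemma mkS_tmul_swap (a b c : V) :
    mkS V (a ⊗ₜ (b ⊗ₜ c)) = mkS V (b ⊗ₜ (a ⊗ₜ c)) :=
  (Submodule.Quotient.eq _).2 (mem_sup_right (subset_span ⟨a, b, c, rfl⟩))

noncomputable def S3.toS3'Lift : T3 V →ₗ[ZMod 2] S3' V :=
  mkS' V + mkS' V ∘ₗ (TensorProduct.leftComm (ZMod 2) V V V).toLinearMap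

lemma S3.toS3'Lift_tmul (a b c : V) :
    S3.toS3'Lift V (a ⊗ₜ (b ⊗ₜ c)) = mkS' V (a ⊗ₜ (b ⊗ₜ c)) + mkS' V (b ⊗ₜ (a ⊗ₜ c)) := by
  simp [S3.toS3'Lift]

lemma S3.symRel_le_ker_toS3'Lift : symRel V ≤ LinearMap.ker (S3.toS3'Lift V) := by
  refine sup_le (span_le.2 ?_) (span_le.2 ?_) <;> rintro _ ⟨a, b, c, rfl⟩ <;>
    simp only [SetLike.mem_coe, LinearMap.mem_ker, map_sub, S3.toS3'Lift_tmul, sub_eq_zero]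
  · -- `B⊙A⊙C = A⊙C⊙B = C⊙B⊙A`
    rw [mkS'_tmul_cyclic V a b c, mkS'_tmul_cyclic V b a c, mkS'_tmul_cyclic V a c b, add_comm]
  · exact add_comm _ _

/-- The map `τ`. -/
noncomputable def S3.toS3' : S3 V →ₗ[ZMod 2] S3' V :=
  (symRel V).liftQ (S3.toS3'Lift V) (S3.symRel_le_ker_toS3'Lift V)

/-- The map `ρ`. -/
noncomputable abbrev S3'.toS3 : S3' V →ₗ[ZMod 2] S3 V :=
  factor (cycRel_le_symRel V)

lemma S3.toS3'_mkS (x : T3 V) : S3.toS3' V (mkS V x) = S3.toS3'Lift V x := rfl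

lemma S3'.toS3_mkS' (x : T3 V) : S3'.toS3 V (mkS' V x) = mkS V x := rfl

lemma S3'.toS3_comp_toS3' : S3'.toS3 V ∘ₗ S3.toS3' V = 0 := by
  ext a b c
  change S3'.toS3 V (S3.toS3' V (mkS V (a ⊗ₜ (b ⊗ₜ c)))) = 0
  rw [S3.toS3'_mkS, S3.toS3'Lift_tmul, map_add, S3'.toS3_mkS', S3'.toS3_mkS',
    mkS_tmul_swap V a b c, ZModModule.add_self]

lemma S3'.ker_toS3_le_range_toS3' :
    LinearMap.ker (S3'.toS3 V) ≤ LinearMap.range (S3.toS3' V) := by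
  rw [S3'.toS3, factor, mapQ, ker_liftQ, LinearMap.comp_id, ker_mkQ, map_le_iff_le_comap]
  refine sup_le (le_comap_mkQ _ _) (span_le.2 ?_)
  rintro _ ⟨a, b, c, rfl⟩
  refine ⟨mkS V (a ⊗ₜ (b ⊗ₜ c)), ?_⟩
  rw [S3.toS3'_mkS, S3.toS3'Lift_tmul, ← ZModModule.sub_eq_add, ← map_sub]
  rfl

lemma S3'.ker_toS3_eq_range_toS3' :
    LinearMap.ker (S3'.toS3 V) = LinearMap.range (S3.toS3' V) :=
  (S3'.ker_toS3_le_range_toS3' V).antisymm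
    (LinearMap.range_le_ker_iff.2 (S3'.toS3_comp_toS3' V))

end

/-- Lemma 1.1: there are well-defined linear maps
`τ : S³(V) → S'³(V)`, `A∙B∙C ↦ A⊙B⊙C + B⊙A⊙C`, and `ρ : S'³(V) → S³(V)`,
`A⊙B⊙C ↦ A∙B∙C`, with `ρ` surjective and `ker ρ = im τ`; i.e. the sequence
`S³(V) → S'³(V) → S³(V) → 0` is exact. -/
theorem S3_S3'_exact_sequence (V : Type*) [AddCommGroup V] [Module (ZMod 2) V] :
    ∃ (τ : S3 V →ₗ[ZMod 2] S3' V) (ρ : S3' V →ₗ[ZMod 2] S3 V),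
      (∀ a b c : V, τ (mkS V (a ⊗ₜ (b ⊗ₜ c))) =
          mkS' V (a ⊗ₜ (b ⊗ₜ c)) + mkS' V (b ⊗ₜ (a ⊗ₜ c))) ∧
      (∀ a b c : V, ρ (mkS' V (a ⊗ₜ (b ⊗ₜ c))) = mkS V (a ⊗ₜ (b ⊗ₜ c))) ∧
      Function.Surjective ρ ∧
      LinearMap.ker ρ = LinearMap.range τ :=
  ⟨S3.toS3' V, S3'.toS3 V, S3.toS3'Lift_tmul V, fun _ _ _ => rfl,
    factor_surjective _, S3'.ker_toS3_eq_range_toS3' V⟩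
end

section
/- Let m ∈ ℤ₂ with m ≡ 1 (mod 8) and √m the square root of m with √m ≡ 1 (mod 4). Let a, b ∈ ℚ₂, and choose the sign ± so that ord₂(a ± b·(3−m)/2) = min(ord₂(a + b·(3−m)/2), ord₂(a − b·(3−m)/2)). Then (a ± b√m)/(a ± b·(3−m)/2) ≡ 1 (mod 8), hence is a square in ℚ₂^×, and therefore the Hilbert symbol (a ± b√m, C)₂ equals (a ± b·(3−m)/2, C)₂ for any C ∈ ℚ₂^×. -/
/-! Writing `s = 1 + 4u`, the relation `2t = 3 - s²` gives `s - t = 8u(u + 1) = 16c` with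
`c ∈ ℤ₂`, and `t ≡ 1 (mod 4)`, so `t` is a unit. The choice of sign makes
`2εbt = (a + εbt) - (a - εbt)` no larger than `a + εbt`, hence
`(a + εbs) / (a + εbt) = 1 + 16cεb / (a + εbt)` lies in `1 + 8ℤ₂`. By Hensel's lemma every
element of `1 + 8ℤ₂` is a square, and a nonzero square factor does not change a Hilbert
symbol. -/

/-- The Hilbert symbol at 2 equals `1`, expressed by the solvability of
`z² = a x² + b y²` nontrivially over `ℚ₂`. -/
def Hilbert2One (a b : ℚ_[2]) : Prop :=
  ∃ x y z : ℚ_[2], (x ≠ 0 ∨ y ≠ 0 ∨ z ≠ 0) ∧ z ^ 2 = a * x ^ 2 + b * y ^ 2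

open IsUltrametricDist Polynomial

lemma Hilbert2One.of_sq_mul {y A C : ℚ_[2]} (hy : y ≠ 0) (h : Hilbert2One (y ^ 2 * A) C) :
    Hilbert2One A C := by
  obtain ⟨X, Y, Z, hXYZ, hZ⟩ := h
  exact ⟨y * X, Y, Z, by simpa [hy] using hXYZ, by rw [hZ]; ring⟩

lemma hilbert2One_sq_mul_iff {y : ℚ_[2]} (hy : y ≠ 0) (A C : ℚ_[2]) :
    Hilbert2One (y ^ 2 * A) C ↔ Hilbert2One A C := by
  refine ⟨Hilbert2One.of_sq_mul hy, fun h ↦ Hilbert2One.of_sq_mul (inv_ne_zero hy) ?_⟩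
  rwa [← mul_assoc, ← mul_pow, inv_mul_cancel₀ hy, one_pow, one_mul]

namespace PadicInt

@[simp, norm_cast]
lemma coe_ofNat {p : ℕ} [Fact p.Prime] (n : ℕ) [n.AtLeastTwo] :
    ((ofNat(n) : ℤ_[p]) : ℚ_[p]) = ofNat(n) :=
  rfl

lemma two_dvd_mul_add_one (u : ℤ_[2]) : 2 ∣ u * (u + 1) := by
  have hker : u * (u + 1) ∈ RingHom.ker (toZMod (p := 2)) := by
    rw [RingHom.mem_ker, map_mul, map_add, map_one]
    generalize toZMod u = v
    revert v
    decide
  rw [ker_toZMod, maximalIdeal_eq_span_p, Ideal.mem_span_singleton] at hker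
  exact_mod_cast hker

lemma norm_one_add_two_mul (k : ℤ_[2]) : ‖1 + 2 * k‖ = 1 := by
  have h2k : ‖2 * k‖ < ‖(1 : ℤ_[2])‖ := by
    rw [norm_one, norm_lt_one_iff_dvd]
    exact_mod_cast dvd_mul_right 2 k
  rw [norm_add_eq_max_of_norm_ne_norm h2k.ne', max_eq_left h2k.le, norm_one]

lemma exists_sq_eq_one_add_eight_mul (w : ℤ_[2]) : ∃ z : ℤ_[2], z ≠ 0 ∧ z ^ 2 = 1 + 8 * w := by
  have hroot : ‖aeval (1 : ℤ_[2]) (X ^ 2 - C (1 + 8 * w))‖ <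
      ‖aeval (1 : ℤ_[2]) (derivative (X ^ 2 - C (1 + 8 * w)))‖ ^ 2 := by
    have h2 : ‖(2 : ℤ_[2])‖ = 2⁻¹ := by exact_mod_cast norm_p (p := 2)
    have h8 : ‖(8 : ℤ_[2])‖ = 8⁻¹ := by
      rw [show (8 : ℤ_[2]) = 2 ^ 3 by norm_num, norm_pow, h2]; norm_num
    simp only [map_sub, map_pow, aeval_X, aeval_C, derivative_X_pow, derivative_C,
      Algebra.algebraMap_self, RingHom.id_apply]
    norm_num [h2, h8]
    linarith [norm_le_one w]
  obtain ⟨z, hz, hz1, -⟩ := hensels_lemma hroot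
  refine ⟨z, ?_, by simpa [sub_eq_zero] using hz⟩
  rintro rfl
  rw [zero_sub, norm_neg, norm_one] at hz1
  exact hz1.not_ge (norm_le_one _)

variable {s t : ℤ_[2]}

lemma sixteen_dvd_sub_of_two_mul_eq (hs : 4 ∣ s - 1) (ht : 2 * t = 3 - s ^ 2) : 16 ∣ s - t := by
  obtain ⟨u, hu⟩ := hs
  obtain ⟨c, hc⟩ := two_dvd_mul_add_one u
  refine ⟨c, mul_left_cancel₀ (two_ne_zero (α := ℤ_[2])) ?_⟩
  linear_combination (s + 3 + 4 * u) * hu - ht + 16 * hc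

lemma norm_eq_one_of_two_mul_eq (hs : 4 ∣ s - 1) (ht : 2 * t = 3 - s ^ 2) : ‖t‖ = 1 := by
  obtain ⟨u, hu⟩ := hs
  have : t = 1 + 2 * (-2 * (u + 2 * u ^ 2)) := by
    refine mul_left_cancel₀ (two_ne_zero (α := ℤ_[2])) ?_
    linear_combination ht - (s + 1 + 4 * u) * hu
  rw [this, norm_one_add_two_mul]

end PadicInt

lemma Padic.norm_le_norm_of_valuation_le {p : ℕ} [Fact p.Prime] {x y : ℚ_[p]} (hx : x ≠ 0)
    (h : y = 0 ∨ x.valuation ≤ y.valuation) : ‖y‖ ≤ ‖x‖ := by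
  obtain rfl | h := h
  · simp
  by_cases hy : y = 0
  · simp [hy]
  rw [norm_eq_zpow_neg_valuation hy, norm_eq_zpow_neg_valuation hx]
  gcongr
  exact_mod_cast (Fact.out : p.Prime).one_lt.le

lemma norm_two_mul_le_of_norm_sub_le {K : Type*} [NormedField K] [IsUltrametricDist K]
    {a c t : K} (ht : ‖t‖ = 1) (h : ‖a - c * t‖ ≤ ‖a + c * t‖) : ‖2 * c‖ ≤ ‖a + c * t‖ := by
  calc ‖2 * c‖ = ‖(a + c * t) + -(a - c * t)‖ := by
        rw [show (a + c * t) + -(a - c * t) = 2 * c * t by ring, norm_mul (2 * c), ht, mul_one]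
    _ ≤ max ‖a + c * t‖ ‖-(a - c * t)‖ := norm_add_le_max _ _
    _ = ‖a + c * t‖ := by rw [norm_neg, max_eq_left h]

lemma exists_eq_mul_one_add_eight_mul {P e : ℚ_[2]} (hP : P ≠ 0) (he : ‖2 * e‖ ≤ ‖P‖)
    (c : ℤ_[2]) : ∃ w : ℤ_[2], P + 16 * c * e = P * (1 + 8 * w) := by
  have hw : ‖2 * c * e / P‖ ≤ 1 := by
    rw [norm_div, div_le_one (norm_pos_iff.2 hP), mul_right_comm, norm_mul (2 * e)]
    exact (mul_le_of_le_one_right (norm_nonneg _) c.2).trans he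
  exact ⟨⟨2 * c * e / P, hw⟩, by push_cast; field_simp; ring⟩

theorem hilbert_sqrt_approx_general (m s t : ℤ_[2])
    (hs : s ^ 2 = m) (hs4 : (4 : ℤ_[2]) ∣ (s - 1))
    (ht : 2 * t = 3 - m)
    (a b ε : ℚ_[2])
    (hne : a + ε * b * (t : ℚ_[2]) ≠ 0)
    (hmin : a - ε * b * (t : ℚ_[2]) = 0 ∨
      (a + ε * b * (t : ℚ_[2])).valuation ≤ (a - ε * b * (t : ℚ_[2])).valuation) :
    (∃ w : ℤ_[2],
        a + ε * b * (s : ℚ_[2]) = (a + ε * b * (t : ℚ_[2])) * (1 + 8 * (w : ℚ_[2]))) ∧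
    (∃ y : ℚ_[2], a + ε * b * (s : ℚ_[2]) = y ^ 2 * (a + ε * b * (t : ℚ_[2]))) ∧
    (∀ C : ℚ_[2], C ≠ 0 →
      (Hilbert2One (a + ε * b * (s : ℚ_[2])) C ↔ Hilbert2One (a + ε * b * (t : ℚ_[2])) C)) := by
  subst hs
  obtain ⟨c, hc⟩ := PadicInt.sixteen_dvd_sub_of_two_mul_eq hs4 ht
  have hst : (s : ℚ_[2]) = t + 16 * c := by rw [eq_add_of_sub_eq' hc]; push_cast; ring
  have htn : ‖(t : ℚ_[2])‖ = 1 := PadicInt.norm_eq_one_of_two_mul_eq hs4 ht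
  have hεb := norm_two_mul_le_of_norm_sub_le htn (Padic.norm_le_norm_of_valuation_le hne hmin)
  obtain ⟨w, hw⟩ := exists_eq_mul_one_add_eight_mul hne hεb c
  have h8w : a + ε * b * s = (a + ε * b * t) * (1 + 8 * w) := by rw [hst, ← hw]; ring
  obtain ⟨z, hz0, hz⟩ := PadicInt.exists_sq_eq_one_add_eight_mul w
  have hzQ : (z : ℚ_[2]) ^ 2 = 1 + 8 * (w : ℚ_[2]) := by
    simpa using congrArg ((↑) : ℤ_[2] → ℚ_[2]) hz
  have hsq : a + ε * b * s = (z : ℚ_[2]) ^ 2 * (a + ε * b * t) := by rw [h8w, hzQ, mul_comm]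
  refine ⟨⟨w, h8w⟩, ⟨z, hsq⟩, fun C _ ↦ ?_⟩
  rw [hsq]
  exact hilbert2One_sq_mul_iff (PadicInt.coe_ne_zero.2 hz0) _ _

/-- let `m = 1 + 8x ∈ ℤ₂`, `s = √m` the square root with `s ≡ 1 (mod 4)`,
and `t = (3 − m)/2`.  For `a, b ∈ ℚ₂` and a sign `ε = ±1` chosen so that
`ord₂(a + εbt)` is minimal among `ord₂(a ± bt)`, the quotient `(a + εbs)/(a + εbt)`
is `≡ 1 (mod 8)`, hence a square in `ℚ₂^×`, and therefore the Hilbert symbols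
`(a + εbs, C)₂` and `(a + εbt, C)₂` agree for every `C ∈ ℚ₂^×`. -/
theorem hilbert_sqrt_approx (m x s t : ℤ_[2]) (hm : m = 1 + 8 * x)
    (hs : s ^ 2 = m) (hs4 : (4 : ℤ_[2]) ∣ (s - 1))
    (ht : 2 * t = 3 - m)
    (a b ε : ℚ_[2]) (hε : ε = 1 ∨ ε = -1)
    (hne : a + ε * b * (t : ℚ_[2]) ≠ 0)
    (hmin : a - ε * b * (t : ℚ_[2]) = 0 ∨
      (a + ε * b * (t : ℚ_[2])).valuation ≤ (a - ε * b * (t : ℚ_[2])).valuation) :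
    (∃ w : ℤ_[2],
        a + ε * b * (s : ℚ_[2]) = (a + ε * b * (t : ℚ_[2])) * (1 + 8 * (w : ℚ_[2]))) ∧
    (∃ y : ℚ_[2], a + ε * b * (s : ℚ_[2]) = y ^ 2 * (a + ε * b * (t : ℚ_[2]))) ∧
    (∀ C : ℚ_[2], C ≠ 0 →
      (Hilbert2One (a + ε * b * (s : ℚ_[2])) C ↔ Hilbert2One (a + ε * b * (t : ℚ_[2])) C)) :=
  hilbert_sqrt_approx_general m s t hs hs4 ht a b ε hne hmin
end

section
/- Let p be an odd prime and suppose x, y, z are integers with x² − A·y² = B·z² where p ∤ A, p ∤ B, p ∤ 2, and p divides some integer C coprime to A and B, with A a square mod p and the relevant symbols defined. Then ((x + y√A)/p) = ((2(x + z√B))/p), i.e., the two candidate formulas for the local factor α_p agree; this follows from the identity (x + y√A)·2(x + z√B) = (x + y√A + z√B)² valid whenever x² − Ay² = Bz². -/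
/-! Modulo `p` the relation reads `x² = α²y² + β²z²`, and then
`(x + yα) · 2(x + zβ) = (x + yα + zβ)²`. A nonzero square has quadratic character `1`, so the two
nonzero factors have the same quadratic character. -/

theorem mul_two_mul_add_eq_sq_of_sq_eq_add {R : Type*} [CommRing R] {x y z α β : R}
    (h : x ^ 2 = α ^ 2 * y ^ 2 + β ^ 2 * z ^ 2) :
    (x + y * α) * (2 * (x + z * β)) = (x + y * α + z * β) ^ 2 := by
  linear_combination h

theorem quadraticChar_eq_of_mul_eq_sq {F : Type*} [Field F] [Fintype F] [DecidableEq F]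
    {a b c : F} (ha : a ≠ 0) (hb : b ≠ 0) (hab : a * b = c ^ 2) :
    quadraticChar F a = quadraticChar F b := by
  have hc : c ≠ 0 := by
    rintro rfl
    exact mul_ne_zero ha hb (by simpa using hab)
  calc quadraticChar F a = quadraticChar F a * quadraticChar F (c ^ 2) := by
        rw [quadraticChar_sq_one' hc, mul_one]
    _ = quadraticChar F a ^ 2 * quadraticChar F b := by rw [← hab, map_mul]; ring
    _ = quadraticChar F b := by rw [quadraticChar_sq_one ha, one_mul]

theorem alpha_p_well_defined_general (p : ℕ) [Fact p.Prime] (A B x y z : ℤ)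
    (h : x ^ 2 - A * y ^ 2 = B * z ^ 2)
    (α β : ZMod p) (hα : α ^ 2 = (A : ZMod p)) (hβ : β ^ 2 = (B : ZMod p))
    (h1 : (x : ZMod p) + (y : ZMod p) * α ≠ 0)
    (h2 : 2 * ((x : ZMod p) + (z : ZMod p) * β) ≠ 0) :
    ((x : ZMod p) + (y : ZMod p) * α) * (2 * ((x : ZMod p) + (z : ZMod p) * β)) =
        ((x : ZMod p) + (y : ZMod p) * α + (z : ZMod p) * β) ^ 2 ∧
      quadraticChar (ZMod p) ((x : ZMod p) + (y : ZMod p) * α) =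
        quadraticChar (ZMod p) (2 * ((x : ZMod p) + (z : ZMod p) * β)) := by
  have hmod : (x : ZMod p) ^ 2 = α ^ 2 * (y : ZMod p) ^ 2 + β ^ 2 * (z : ZMod p) ^ 2 := by
    have h' := congrArg (Int.cast : ℤ → ZMod p) h
    push_cast at h'
    rw [hα, hβ]
    linear_combination h'
  have key := mul_two_mul_add_eq_sq_of_sq_eq_add hmod
  exact ⟨key, quadraticChar_eq_of_mul_eq_sq h1 h2 key⟩

/-- Remark 2.4, case of `α_p`: let `p` be an odd prime, `x, y, z` integers
with `x² − A y² = B z²`, `p ∤ A`, `p ∤ B`, and `p` dividing an integer `C` coprime to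
`A` and `B`.  If `√A`, `√B` denote square roots of `A`, `B` mod `p` and the two symbols
are nonzero, then `((x + y√A)/p) = ((2(x + z√B))/p)`; this follows from the identity
`(x + y√A)·2(x + z√B) = (x + y√A + z√B)²` mod `p`. -/
theorem alpha_p_well_defined (p : ℕ) [Fact p.Prime] (hp : p ≠ 2) (A B C x y z : ℤ)
    (hA : ¬ (p : ℤ) ∣ A) (hB : ¬ (p : ℤ) ∣ B)
    (hC : (p : ℤ) ∣ C) (hCA : IsCoprime C A) (hCB : IsCoprime C B)
    (h : x ^ 2 - A * y ^ 2 = B * z ^ 2)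
    (α β : ZMod p) (hα : α ^ 2 = (A : ZMod p)) (hβ : β ^ 2 = (B : ZMod p))
    (h1 : (x : ZMod p) + (y : ZMod p) * α ≠ 0)
    (h2 : 2 * ((x : ZMod p) + (z : ZMod p) * β) ≠ 0) :
    ((x : ZMod p) + (y : ZMod p) * α) * (2 * ((x : ZMod p) + (z : ZMod p) * β)) =
        ((x : ZMod p) + (y : ZMod p) * α + (z : ZMod p) * β) ^ 2 ∧
      quadraticChar (ZMod p) ((x : ZMod p) + (y : ZMod p) * α) =
        quadraticChar (ZMod p) (2 * ((x : ZMod p) + (z : ZMod p) * β)) :=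
  alpha_p_well_defined_general p A B x y z h α β hα hβ h1 h2
end

section
/- (Euler's conjecture, proved by Gauss) Let p ≡ 1 (mod 8) be a prime, and write p = a² + b² with a odd and b even. Then 2 is a fourth power modulo p if and only if 8 divides b. -/
/-!
In `𝔽_p` we have `a² = -b²`, hence `(a + b)² = 2ab` and `(ab)² = -a⁴`. With `m = (p - 1) / 8`,
raising the first identity to the power `2m` and using Euler's criterion gives
`(-1)ᵐ ((a + b) / p) = 2^((p-1)/4) (a / p)`.
Jacobi reciprocity (`p ≡ 1 mod 4`) gives `(a / p) = (p / |a|) = (b² / |a|) = 1` and, since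
`2p = (a + b)² + (a - b)²`, also `((a + b) / p) = (2 / |a + b|) = χ₈(a + b)`.
As `p ≡ a² (mod 16)`, `(-1)ᵐ = χ₈(a)`, so `2^((p-1)/4) = χ₈(a + b) χ₈(a)`, which is `1` exactly
when `8 ∣ b` (`p ≡ 1 mod 8` forces `4 ∣ b`). Finally, the unit group being cyclic, `2` is a
fourth power iff `2^((p-1)/4) = 1`.
-/

open ZMod
open scoped NumberTheorySymbols

theorem IsCyclic.exists_pow_eq_iff {G : Type*} [Group G] [IsCyclic G] [Finite G] {n : ℕ}
    (hn : n ∣ Nat.card G) (x : G) : (∃ y, y ^ n = x) ↔ x ^ (Nat.card G / n) = 1 := by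
  constructor
  · rintro ⟨y, rfl⟩
    rw [← pow_mul, Nat.mul_div_cancel' hn, pow_card_eq_one']
  · intro hx
    obtain ⟨g, hg⟩ := IsCyclic.exists_generator (α := G)
    obtain ⟨k, rfl⟩ : x ∈ Submonoid.powers g := mem_powers_iff_mem_zpowers.mpr (hg x)
    have hpos : 0 < Nat.card G / n :=
      Nat.div_pos (Nat.le_of_dvd Nat.card_pos hn) (Nat.pos_of_dvd_of_pos hn Nat.card_pos)
    have hdvd : n * (Nat.card G / n) ∣ k * (Nat.card G / n) :=
      calc n * (Nat.card G / n) = orderOf g := by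
            rw [Nat.mul_div_cancel' hn, orderOf_eq_card_of_forall_mem_zpowers hg]
        _ ∣ k * (Nat.card G / n) := orderOf_dvd_of_pow_eq_one (by rw [pow_mul]; exact hx)
    obtain ⟨j, rfl⟩ := Nat.dvd_of_mul_dvd_mul_right hpos hdvd
    exact ⟨g ^ j, by rw [← pow_mul, mul_comm]⟩

theorem FiniteField.exists_pow_eq_iff {K : Type*} [Field K] [Fintype K] {n : ℕ}
    (hn : n ∣ Fintype.card K - 1) {u : K} (hu : u ≠ 0) :
    (∃ x, x ^ n = u) ↔ u ^ ((Fintype.card K - 1) / n) = 1 := by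
  classical
  rw [← Fintype.card_units, ← Nat.card_eq_fintype_card] at hn ⊢
  have hn0 : n ≠ 0 := by rintro rfl; exact Nat.card_pos.ne' (zero_dvd_iff.mp hn)
  convert IsCyclic.exists_pow_eq_iff hn (Units.mk0 u hu) using 1
  · constructor
    · rintro ⟨x, rfl⟩
      exact ⟨Units.mk0 x (ne_zero_pow hn0 hu), Units.ext (by simp)⟩
    · rintro ⟨y, hy⟩
      exact ⟨y, by simpa using congrArg Units.val hy⟩
  · simp [Units.ext_iff]

theorem neg_one_pow_mul_add_pow_four_mul {R : Type*} [CommRing R] {a b : R}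
    (h : a ^ 2 + b ^ 2 = 0) (m : ℕ) :
    (-1) ^ m * (a + b) ^ (4 * m) = 2 ^ (2 * m) * a ^ (4 * m) := by
  have hsq : (a + b) ^ 2 = 2 * a * b := by linear_combination h
  have hab : -(a * b) ^ 2 = a ^ 4 := by linear_combination -a ^ 2 * h
  calc (-1) ^ m * (a + b) ^ (4 * m) = (-1) ^ m * ((a + b) ^ 2) ^ (2 * m) := by
        rw [← pow_mul]; ring
    _ = 2 ^ (2 * m) * (-(a * b) ^ 2) ^ m := by rw [hsq]; ring
    _ = 2 ^ (2 * m) * a ^ (4 * m) := by rw [hab]; ring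

theorem neg_one_pow_mul_jacobiSym_add {p : ℕ} [Fact p.Prime] (hp : p % 8 = 1) {a b : ℤ}
    (h : (p : ℤ) = a ^ 2 + b ^ 2) :
    (-1) ^ (p / 8) * (J(a + b | p) : ZMod p) = 2 ^ (p / 4) * J(a | p) := by
  have hsq : (a : ZMod p) ^ 2 + (b : ZMod p) ^ 2 = 0 := by
    have : ((p : ℤ) : ZMod p) = 0 := by simp
    rw [h] at this
    exact_mod_cast this
  have key := neg_one_pow_mul_add_pow_four_mul hsq (p / 8)
  rwa [show 4 * (p / 8) = p / 2 by omega, show 2 * (p / 8) = p / 4 by omega, ← Int.cast_add,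
    ← legendreSym.eq_pow, ← legendreSym.eq_pow, jacobiSym.legendreSym.to_jacobiSym,
    jacobiSym.legendreSym.to_jacobiSym] at key

theorem isCoprime_of_prime_eq_sq_add_sq {p : ℕ} (hp : p.Prime) {a b : ℤ}
    (h : (p : ℤ) = a ^ 2 + b ^ 2) : IsCoprime a b := by
  refine isRelPrime_iff_isCoprime.mp fun d hda hdb =>
    (Nat.prime_iff_prime_int.mp hp).squarefree d ?_
  rw [h, sq, sq]
  exact dvd_add (mul_dvd_mul hda hda) (mul_dvd_mul hdb hdb)

theorem IsCoprime.add_sub_of_odd {a b : ℤ} (h : IsCoprime a b) (hodd : Odd (a + b)) :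
    IsCoprime (a + b) (a - b) := by
  have h2 : IsCoprime (a + b) 2 := by
    obtain ⟨k, hk⟩ := hodd
    exact ⟨1, -k, by rw [hk]; ring⟩
  have ha : IsCoprime (a + b) a := by
    simpa [add_comm] using h.symm.add_mul_left_left 1
  rw [show a - b = 2 * a + (a + b) * -1 by ring]
  exact (h2.mul_right ha).add_mul_left_right (-1)

theorem jacobiSym_natAbs_left {n : ℕ} (hn : n % 4 = 1) (x : ℤ) : J(x.natAbs | n) = J(x | n) := by
  rcases Int.natAbs_eq x with h | h
  · rw [← h]
  · conv_rhs => rw [h]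
    rw [jacobiSym.neg _ (Nat.odd_iff.mpr (by omega)), χ₄_nat_one_mod_four hn, one_mul]

theorem jacobiSym_eq_of_mul_eq_sq_add_sq {m n : ℕ} (hn : n % 4 = 1) {x y : ℤ} (hx : Odd x)
    (hxy : IsCoprime x y) (h : (m * n : ℤ) = x ^ 2 + y ^ 2) : J(x | n) = J(m | x.natAbs) := by
  have hmn : J(m | x.natAbs) * J(n | x.natAbs) = 1 := by
    rw [← jacobiSym.mul_left, jacobiSym.mod_left' (a₂ := y ^ 2), jacobiSym.sq_one']
    · rw [← Int.isCoprime_iff_gcd_eq_one, Int.natCast_natAbs]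
      exact hxy.symm.abs_right
    · refine Int.modEq_iff_dvd.mpr (Int.natAbs_dvd.mpr (Dvd.intro (-x) ?_))
      linear_combination h
  have hnm : J(n | x.natAbs) = J(m | x.natAbs) := by
    rcases Int.eq_one_or_neg_one_of_mul_eq_one' hmn with ⟨h1, h2⟩ | ⟨h1, h2⟩ <;> rw [h1, h2]
  rw [← jacobiSym_natAbs_left hn,
    jacobiSym.quadratic_reciprocity_one_mod_four' (Int.natAbs_odd.mpr hx) hn, hnm]

theorem jacobiSym_eq_χ₈_of_two_mul_eq_sq_add_sq {n : ℕ} (hn : n % 4 = 1) {x y : ℤ} (hx : Odd x)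
    (hxy : IsCoprime x y) (h : 2 * (n : ℤ) = x ^ 2 + y ^ 2) : J(x | n) = χ₈ x := by
  rw [jacobiSym_eq_of_mul_eq_sq_add_sq (m := 2) hn hx hxy (by exact_mod_cast h), Nat.cast_ofNat,
    jacobiSym.at_two (Int.natAbs_odd.mpr hx), χ₈_nat_eq_if_mod_eight, χ₈_int_eq_if_mod_eight]
  split_ifs <;> omega

theorem Int.sq_emod_sixteen_of_odd {a : ℤ} (ha : Odd a) :
    a ^ 2 % 16 = if a % 8 = 1 ∨ a % 8 = 7 then 1 else 9 := by
  have hq : a ^ 2 = (a % 8) ^ 2 + 16 * (4 * (a / 8) ^ 2 + a / 8 * (a % 8)) := by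
    conv_lhs => rw [← Int.emod_add_mul_ediv a 8]
    ring
  have hr : a % 8 = 1 ∨ a % 8 = 3 ∨ a % 8 = 5 ∨ a % 8 = 7 := by
    have := Int.odd_iff.mp ha
    omega
  rcases hr with h | h | h | h <;> simp only [h] at hq ⊢ <;> norm_num at hq ⊢ <;> omega

theorem four_dvd_of_sq_add_sq_emod_eight {a b : ℤ} (ha : Odd a) (hb : Even b)
    (h : (a ^ 2 + b ^ 2) % 8 = 1) : 4 ∣ b := by
  obtain ⟨c, rfl⟩ := hb
  rcases Int.even_or_odd c with ⟨d, rfl⟩ | hc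
  · exact ⟨d, by ring⟩
  · have ha2 := Int.sq_emod_sixteen_of_odd ha
    have hc2 := Int.sq_mod_four_eq_one_of_odd hc
    have : (c + c) ^ 2 = 4 * c ^ 2 := by ring
    split_ifs at ha2 <;> omega

theorem neg_one_pow_div_eight_eq_χ₈ {p : ℕ} {a b : ℤ} (hab : (p : ℤ) = a ^ 2 + b ^ 2)
    (ha : Odd a) (hb : 4 ∣ b) : (-1) ^ (p / 8) = χ₈ a := by
  obtain ⟨c, rfl⟩ := hb
  have hp : (p : ℤ) = a ^ 2 + 16 * c ^ 2 := by rw [hab]; ring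
  have ha2 := Int.sq_emod_sixteen_of_odd ha
  rw [χ₈_int_eq_if_mod_eight, if_neg (by have := Int.odd_iff.mp ha; omega)]
  split_ifs at ha2 ⊢
  · exact Even.neg_one_pow (Nat.even_iff.mpr (by omega))
  · exact Odd.neg_one_pow (Nat.odd_iff.mpr (by omega))

theorem χ₈_add_mul_χ₈ {a b : ℤ} (ha : Odd a) (hb : 4 ∣ b) :
    χ₈ ↑(a + b) * χ₈ a = if 8 ∣ b then 1 else -1 := by
  have := Int.odd_iff.mp ha
  simp only [χ₈_int_eq_if_mod_eight]
  split_ifs <;> omega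

/-- Euler's conjecture, proved by Gauss: let `p ≡ 1 (mod 8)` be prime
and write `p = a² + b²` with `a` odd and `b` even.  Then `2` is a fourth power modulo
`p` if and only if `8 ∣ b`. -/
theorem gauss_biquadratic_two (p : ℕ) [Fact p.Prime] (hp : p % 8 = 1) (a b : ℤ)
    (hab : (p : ℤ) = a ^ 2 + b ^ 2) (ha : Odd a) (hb : Even b) :
    (∃ x : ZMod p, x ^ 4 = 2) ↔ (8 : ℤ) ∣ b := by
  have hp4 : p % 4 = 1 := by omega
  have : Fact (2 < p) := ⟨by have := (Fact.out : p.Prime).one_lt; omega⟩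
  have hb4 : 4 ∣ b := four_dvd_of_sq_add_sq_emod_eight ha hb (by rw [← hab]; omega)
  have hcop : IsCoprime a b := isCoprime_of_prime_eq_sq_add_sq Fact.out hab
  have hs : Odd (a + b) := ha.add_even hb
  have hJa : J(a | p) = 1 := by
    rw [jacobiSym_eq_of_mul_eq_sq_add_sq (m := 1) hp4 ha hcop (by simpa using hab), Nat.cast_one,
      jacobiSym.one_left]
  have hJs : J(a + b | p) = χ₈ ↑(a + b) :=
    jacobiSym_eq_χ₈_of_two_mul_eq_sq_add_sq hp4 hs (hcop.add_sub_of_odd hs) (by rw [hab]; ring)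
  have h2 : (2 : ZMod p) ^ (p / 4) = ((χ₈ ↑(a + b) * χ₈ a : ℤ) : ZMod p) := by
    have key := neg_one_pow_mul_jacobiSym_add hp hab
    rw [hJa, hJs] at key
    rw [← neg_one_pow_div_eight_eq_χ₈ hab ha hb4]
    push_cast at key ⊢
    linear_combination -key
  have h2ne : (2 : ZMod p) ≠ 0 := fun h => neg_one_ne_one (by linear_combination -h)
  rw [FiniteField.exists_pow_eq_iff (by rw [ZMod.card]; omega) h2ne, ZMod.card,
    show (p - 1) / 4 = p / 4 by omega, h2, χ₈_add_mul_χ₈ ha hb4]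
  split_ifs with h8
  · simp [h8]
  · simp [h8, neg_one_ne_one]
end

section
/- Let p ≡ q ≡ 1 (mod 4) be distinct primes with (p/q) = 1, write p = a² + b², a odd, b even, and let i be a square root of −1 mod q (which exists since q ≡ 1 mod 4). Then (p/q)₄·(q/p)₄ = ((a + b·i)/q). -/
/-!
Let `χ` be a character of order 4 on `(ℤ/pℤ)ˣ` with values in `ℤ[i]`, and `J = J(χ, χ)` its
Jacobi sum. Then `J = A + Bi` with `A² + B² = p` and `J ≡ -1 mod 2`, so `A` is odd, `B` is even,
and uniqueness of such representations gives `(A, B) = (±a, ±b)`; since `(a + bi)(a - bi) = p`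
and `-1` are squares mod `q`, the signs do not change `((a + bi)/q)`.

Send `i` to the given root of `-1` mod `q` and work in a field of characteristic `q` containing
the `p`-th roots of unity. There the Gauss sum `G = g(χ)` satisfies `G⁴ = J² p` and, by
Frobenius, `χ(q) G^q = G`, so `χ(q) J^((q-1)/2) p^((q-1)/4) = 1`. By Euler's criterion the three
factors are `(q/p)₄`, `((A + Bi)/q)` and `(p/q)₄`, each `±1`, which gives the theorem.
-/

/-- The rational quartic residue symbol `(m/p)₄ = m^((p−1)/4) mod p`, recorded as an
integer: it is `1` or `−1` when `m^((p−1)/4) = ±1` in `ZMod p`, and `0` otherwise. -/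
def quarticSym (p : ℕ) (m : ℤ) : ℤ :=
  if (m : ZMod p) ^ ((p - 1) / 4) = 1 then 1
  else if (m : ZMod p) ^ ((p - 1) / 4) = -1 then -1 else 0

local notation "ℤ[i]" => GaussianInt

open Zsqrtd ComplexConjugate

namespace Int

lemma isCoprime_of_sq_add_sq_eq_prime {p : ℕ} (hp : p.Prime) {a b : ℤ}
    (h : a ^ 2 + b ^ 2 = p) : IsCoprime a b := by
  rw [Int.isCoprime_iff_gcd_eq_one]
  have hsq : Squarefree (p : ℤ) := Int.squarefree_natCast.mpr hp.squarefree
  have hdvd : (Int.gcd a b : ℤ) * Int.gcd a b ∣ p := by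
    rw [← h, sq, sq]
    exact dvd_add (mul_dvd_mul (Int.gcd_dvd_left a b) (Int.gcd_dvd_left a b))
      (mul_dvd_mul (Int.gcd_dvd_right a b) (Int.gcd_dvd_right a b))
  simpa using Int.isUnit_iff_natAbs_eq.mp (hsq _ hdvd)

lemma eq_and_eq_or_eq_neg_and_eq_neg_of_mul_eq_mul {a b A B : ℤ} (hab : IsCoprime a b)
    (hAB : IsCoprime A B) (ha : a ≠ 0) (h : a * B = b * A) :
    A = a ∧ B = b ∨ A = -a ∧ B = -b := by
  have haA : a ∣ A := hab.dvd_of_dvd_mul_left ⟨B, by linear_combination -h⟩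
  have hAa : A ∣ a := hAB.dvd_of_dvd_mul_right ⟨b, by linear_combination h⟩
  rcases Int.natAbs_eq_natAbs_iff.mp (Int.natAbs_eq_of_dvd_dvd hAa haA) with rfl | rfl
  · exact .inl ⟨rfl, mul_left_cancel₀ ha (by linear_combination h)⟩
  · exact .inr ⟨rfl, mul_left_cancel₀ ha (by linear_combination h)⟩

/-- Since `p ∣ aB - bA` and `(aA + bB)² + (aB - bA)² = p²`, either `aB = bA` or `aA + bB = 0`;
the latter makes `B` divide `a`, which parity forbids. -/
lemma eq_or_eq_neg_of_sq_add_sq_eq_prime_of_dvd {p : ℕ} (hp : p.Prime) {a b A B : ℤ}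
    (h : a ^ 2 + b ^ 2 = p) (h' : A ^ 2 + B ^ 2 = p) (ha : Odd a) (hB : Even B)
    (hdvd : (p : ℤ) ∣ a * B - b * A) :
    A = a ∧ B = b ∨ A = -a ∧ B = -b := by
  have hAB := isCoprime_of_sq_add_sq_eq_prime hp h'
  obtain ⟨k, hk⟩ := hdvd
  rcases eq_or_ne k 0 with rfl | hk0
  · refine eq_and_eq_or_eq_neg_and_eq_neg_of_mul_eq_mul
      (isCoprime_of_sq_add_sq_eq_prime hp h) hAB ?_ (by linear_combination hk)
    rintro rfl
    exact Int.not_odd_zero ha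
  · have hsum : (a * A + b * B) ^ 2 + (p * k) ^ 2 = (p : ℤ) ^ 2 := by
      rw [← hk]; linear_combination (A ^ 2 + B ^ 2) * h + p * h'
    have hx : a * A + b * B = 0 := by
      have : 0 < k ^ 2 := by positivity
      nlinarith [sq_nonneg (a * A + b * B)]
    have hBa : B ∣ a := hAB.symm.dvd_of_dvd_mul_right ⟨-b, by linear_combination hx⟩
    exact absurd (even_iff_two_dvd.mpr (hB.two_dvd.trans hBa)) (Int.not_even_iff_odd.mpr ha)

lemma eq_or_eq_neg_of_sq_add_sq_eq_prime {p : ℕ} (hp : p.Prime) {a b A B : ℤ}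
    (h : a ^ 2 + b ^ 2 = p) (h' : A ^ 2 + B ^ 2 = p) (ha : Odd a) (hB : Even B) :
    (A = a ∨ A = -a) ∧ (B = b ∨ B = -b) := by
  have hprod : (a * B - b * A) * (a * B - -b * A) = (B ^ 2 - b ^ 2) * p := by
    linear_combination B ^ 2 * h - b ^ 2 * h'
  rcases Int.Prime.dvd_mul' hp ⟨_, hprod.trans (mul_comm _ _)⟩ with hdvd | hdvd
  · rcases eq_or_eq_neg_of_sq_add_sq_eq_prime_of_dvd hp h h' ha hB hdvd
      with ⟨rfl, rfl⟩ | ⟨rfl, rfl⟩ <;> simp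
  · rcases eq_or_eq_neg_of_sq_add_sq_eq_prime_of_dvd hp (by linear_combination h) h' ha hB hdvd
      with ⟨rfl, rfl⟩ | ⟨rfl, rfl⟩ <;> simp

lemma mul_eq_of_intCast_mul_mul_eq_one {n : ℕ} [Fact (2 < n)] {x y z : ℤ} (hx : IsUnit x)
    (hy : IsUnit y) (hz : IsUnit z) (h : (x : ZMod n) * y * z = 1) : z * x = y := by
  rcases Int.isUnit_iff.mp hx with rfl | rfl <;> rcases Int.isUnit_iff.mp hy with rfl | rfl <;>
    rcases Int.isUnit_iff.mp hz with rfl | rfl <;> simp_all [ZMod.neg_one_ne_one]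

end Int

section QuadraticChar

variable {F : Type*} [Field F] [Fintype F] [DecidableEq F]

lemma isUnit_quadraticChar {a : F} (ha : a ≠ 0) : IsUnit (quadraticChar F a) :=
  Int.isUnit_iff.mpr (quadraticChar_dichotomy ha)

lemma quadraticChar_eq_of_mul_eq_one {u v : F} (h : quadraticChar F (u * v) = 1) :
    quadraticChar F v = quadraticChar F u := by
  have hu : u ≠ 0 := by rintro rfl; simp at h
  rw [map_mul] at h
  linear_combination (quadraticChar F u) * h - (quadraticChar F v) * quadraticChar_sq_one hu

lemma quadraticChar_neg_of_card_mod_four (hF : Fintype.card F % 4 = 1) (x : F) :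
    quadraticChar F (-x) = quadraticChar F x := by
  have hF2 : ringChar F ≠ 2 := by
    intro h
    have := FiniteField.even_card_iff_char_two.mp h
    omega
  rw [neg_eq_neg_one_mul, map_mul, quadraticChar_neg_one hF2, ZMod.χ₄_nat_one_mod_four hF, one_mul]

lemma quadraticChar_add_mul_eq_of_eq_or_eq_neg (hF : Fintype.card F % 4 = 1) {i : F}
    (hi : i ^ 2 = -1) {a b A B : F} (hA : A = a ∨ A = -a) (hB : B = b ∨ B = -b)
    (hab : quadraticChar F (a ^ 2 + b ^ 2) = 1) :
    quadraticChar F (A + B * i) = quadraticChar F (a + b * i) := by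
  have hconj : quadraticChar F (a - b * i) = quadraticChar F (a + b * i) :=
    quadraticChar_eq_of_mul_eq_one (by rw [← hab]; congr 1; linear_combination (-b ^ 2) * hi)
  rcases hA with rfl | rfl <;> rcases hB with rfl | rfl
  · rfl
  · rw [← hconj]; ring_nf
  · rw [← hconj, ← quadraticChar_neg_of_card_mod_four hF]; ring_nf
  · rw [← quadraticChar_neg_of_card_mod_four hF]; ring_nf

end QuadraticChar

lemma ZMod.sq_pow_div_four_eq_quadraticChar {p : ℕ} [Fact p.Prime] (hp4 : p % 4 = 1)
    (u : ZMod p) : (u ^ 2) ^ ((p - 1) / 4) = quadraticChar (ZMod p) u := by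
  have hp2 : ringChar (ZMod p) ≠ 2 := by rw [ZMod.ringChar_zmod_n]; omega
  rw [quadraticChar_eq_pow_of_char_ne_two' hp2, ZMod.card, ← pow_mul]
  congr 1
  omega

lemma quarticSym_eq_quadraticChar {p : ℕ} [Fact p.Prime] (hp4 : p % 4 = 1) {m : ℤ} {u : ZMod p}
    (hu : u ≠ 0) (hm : (m : ZMod p) = u ^ 2) :
    quarticSym p m = quadraticChar (ZMod p) u := by
  have : Fact (2 < p) := ⟨by have := (Fact.out : p.Prime).two_le; omega⟩
  rw [quarticSym, hm, ZMod.sq_pow_div_four_eq_quadraticChar hp4]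
  rcases quadraticChar_dichotomy hu with h | h <;> simp [h, ZMod.neg_one_ne_one]

namespace MulChar

variable {M : Type*} [CommMonoid M] {R : Type*} [CommRing R] {χ : MulChar M R} {g : Mˣ}

lemma pow_four_eq_one_of_apply_sq_eq_neg_one (hg : ∀ x, x ∈ Subgroup.zpowers g)
    (hχ : χ g ^ 2 = -1) : χ ^ 4 = 1 := by
  rw [MulChar.eq_iff hg, pow_apply' χ four_ne_zero, one_apply_coe,
    show 4 = 2 * 2 from rfl, pow_mul, hχ, neg_one_sq]

lemma sq_ne_one_of_apply_sq_eq_neg_one [Nontrivial R] (hR : ringChar R ≠ 2)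
    (hχ : χ g ^ 2 = -1) : χ ^ 2 ≠ 1 := by
  rw [ne_one_iff]
  exact ⟨g, by rw [pow_apply' χ two_ne_zero, hχ]; exact Ring.neg_one_ne_one_of_char_ne_two hR⟩

lemma sq_eq_quadraticChar_of_apply_sq_eq_neg_one {F : Type*} [Field F] [Fintype F]
    [DecidableEq F] (hF : ringChar F ≠ 2) {χ : MulChar F R} {g : Fˣ}
    (hg : ∀ x, x ∈ Subgroup.zpowers g) (hχ : χ g ^ 2 = -1) :
    χ ^ 2 = (quadraticChar F).ringHomComp (Int.castRingHom R) := by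
  have hF3 : 3 ≤ Fintype.card F := by
    have := Fintype.one_lt_card (α := F)
    have := mt FiniteField.even_card_iff_char_two.mpr hF
    omega
  have hcard : Fintype.card F / 2 < orderOf g := by
    rw [orderOf_eq_card_of_forall_mem_zpowers hg, Nat.card_eq_fintype_card, Fintype.card_units]
    omega
  have hgen : quadraticChar F g = -1 := by
    rw [quadraticChar_eq_pow_of_char_ne_two hF g.ne_zero, if_neg]
    rw [← Units.val_pow_eq_pow_val, Units.val_eq_one]
    exact pow_ne_one_of_lt_orderOf (by omega) hcard
  rw [MulChar.eq_iff hg, pow_apply' χ two_ne_zero, hχ, ringHomComp_apply, hgen]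
  simp

end MulChar

namespace GaussianInt

lemma sqrtd_sq : (sqrtd : ℤ[i]) ^ 2 = -1 := by
  ext <;> simp [sq]

lemma isPrimitiveRoot_sqrtd : IsPrimitiveRoot (sqrtd : ℤ[i]) 4 :=
  IsPrimitiveRoot.of_map_of_injective (f := toComplex)
    (by simpa [toComplex_def] using Complex.isPrimitiveRoot_I) toComplex_injective

lemma exists_mulChar_apply_generator_eq_sqrtd {p : ℕ} [Fact p.Prime] (hp4 : p % 4 = 1) :
    ∃ (χ : MulChar (ZMod p) ℤ[i]) (g : (ZMod p)ˣ),
      (∀ x, x ∈ Subgroup.zpowers g) ∧ χ g = sqrtd := by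
  classical
  obtain ⟨g, hg⟩ := IsCyclic.exists_generator (α := (ZMod p)ˣ)
  have h4 : 4 ∣ Fintype.card (ZMod p)ˣ := by
    rw [ZMod.card_units]; omega
  let ζ := rootsOfUnity_le_of_dvd h4 isPrimitiveRoot_sqrtd.toRootsOfUnity.2
  exact ⟨MulChar.ofRootOfUnity ζ hg, g, hg, MulChar.ofRootOfUnity_spec ζ hg⟩

variable {F : Type*} [Field F] [Fintype F]

lemma norm_jacobiSum {χ φ : MulChar F ℤ[i]} (hχ : χ ≠ 1) (hφ : φ ≠ 1) (hχφ : χ * φ ≠ 1) :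
    (jacobiSum χ φ).norm = Fintype.card F := by
  have hinj := toComplex_injective
  set χ' := χ.ringHomComp toComplex
  set φ' := φ.ringHomComp toComplex
  have hchar : ringChar ℂ ≠ ringChar F := by
    rw [ringChar.eq_zero]; exact (CharP.char_ne_zero_of_finite F (ringChar F)).symm
  have key := jacobiSum_mul_jacobiSum_inv hchar
    ((MulChar.ringHomComp_ne_one_iff hinj).mpr hχ) ((MulChar.ringHomComp_ne_one_iff hinj).mpr hφ)
    (by rwa [← MulChar.ringHomComp_mul, MulChar.ringHomComp_ne_one_iff hinj])
  have hstar : jacobiSum χ'⁻¹ φ'⁻¹ = conj (jacobiSum χ' φ') := by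
    rw [← MulChar.star_eq_inv, ← MulChar.star_eq_inv]
    exact jacobiSum_ringHomComp _ _ (starRingEnd ℂ)
  rw [hstar, Complex.mul_conj, jacobiSum_ringHomComp, ← intCast_complex_norm] at key
  exact_mod_cast key

/-- `J ≡ -1 mod (i - 1)²`, and `(i - 1)² = -2i`. -/
lemma jacobiSum_re_odd_im_even {χ φ : MulChar F ℤ[i]} (hχ : χ ^ 4 = 1) (hφ : φ ^ 4 = 1)
    (hF : 4 ∣ Fintype.card F - 1) :
    Odd (jacobiSum χ φ).re ∧ Even (jacobiSum χ φ).im := by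
  obtain ⟨z, -, hz⟩ := exists_jacobiSum_eq_neg_one_add (by norm_num) hχ hφ hF isPrimitiveRoot_sqrtd
  rw [hz]
  constructor
  · exact ⟨z.im - 1, by simp [sq]; ring⟩
  · exact ⟨-z.re, by simp [sq]; ring⟩

end GaussianInt

lemma gaussSum_frob_of_pow_eq {F R : Type*} [CommRing F] [Fintype F] [CommRing R]
    (q : ℕ) [Fact q.Prime] [CharP R q] (hq : IsUnit (q : F)) {χ : MulChar F R} (hχ : χ ^ q = χ)
    (ψ : AddChar F R) :
    χ q * gaussSum χ ψ ^ q = gaussSum χ ψ := by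
  rw [gaussSum_frob, hχ, AddChar.pow_mulShift, ← hq.unit_spec, gaussSum_mulShift]

lemma gaussSum_pow_four {F R : Type*} [Field F] [Fintype F] [CommRing R] [IsDomain R]
    {χ : MulChar F R} (hχ4 : χ ^ 4 = 1) (hχ2 : χ ^ 2 ≠ 1) {ψ : AddChar F R}
    (hψ : ψ.IsPrimitive) :
    gaussSum χ ψ ^ 4 = jacobiSum χ χ ^ 2 * Fintype.card F := by
  have hquad : (χ ^ 2).IsQuadratic :=
    MulChar.isQuadratic_iff_sq_eq_one.mpr (by rw [← pow_mul]; exact hχ4)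
  have hsq : gaussSum (χ ^ 2) ψ ^ 2 = Fintype.card F := by
    rw [gaussSum_sq hχ2 hquad hψ, MulChar.pow_apply' χ two_ne_zero, ← map_pow, neg_one_sq,
      map_one, one_mul]
  calc gaussSum χ ψ ^ 4 = (gaussSum χ ψ * gaussSum χ ψ) ^ 2 := by ring
    _ = (gaussSum (χ ^ 2) ψ * jacobiSum χ χ) ^ 2 := by
      rw [← jacobiSum_mul_nontrivial (by rwa [← sq]), sq χ]
    _ = jacobiSum χ χ ^ 2 * Fintype.card F := by rw [mul_pow, hsq, mul_comm]

lemma mul_jacobiSum_pow_mul_card_pow_eq_one {F K : Type*} [Field F] [Fintype F] [Field K]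
    (q : ℕ) [Fact q.Prime] [CharP K q] (hq4 : q % 4 = 1) (hF : ringChar F ≠ q)
    {χ : MulChar F K} (hχ4 : χ ^ 4 = 1) (hχ2 : χ ^ 2 ≠ 1) :
    χ q * jacobiSum χ χ ^ ((q - 1) / 2) * (Fintype.card F : K) ^ ((q - 1) / 4) = 1 := by
  have hqp := (Fact.out : q.Prime)
  have hFp := CharP.char_is_prime F (ringChar F)
  have hqF : IsUnit (q : F) := by
    refine isUnit_iff_ne_zero.mpr fun h => hF ?_
    exact (Nat.prime_dvd_prime_iff_eq hFp hqp).mp ((ringChar.spec F q).mp h)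
  let ψ := AddChar.FiniteField.primitiveChar F K (by rw [ringChar.eq K q]; exact hF.symm)
  let L := CyclotomicField ψ.n K
  have : CharP L q := charP_of_injective_algebraMap (algebraMap K L).injective q
  set χ' := χ.ringHomComp (algebraMap K L) with hχ'
  have hχ'4 : χ' ^ 4 = 1 := by rw [hχ', MulChar.ringHomComp_pow, hχ4, MulChar.ringHomComp_one]
  have hχ'2 : χ' ^ 2 ≠ 1 := by
    rwa [hχ', MulChar.ringHomComp_pow, MulChar.ringHomComp_ne_one_iff (algebraMap K L).injective]
  have hcard : (Fintype.card F : L) ≠ 0 := by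
    obtain ⟨n, -, hn⟩ := FiniteField.card F (ringChar F)
    rw [hn, Nat.cast_pow, Ne, pow_eq_zero_iff n.ne_zero, CharP.cast_eq_zero_iff L q,
      Nat.prime_dvd_prime_iff_eq hqp hFp]
    exact fun h => hF h.symm
  set G := gaussSum χ' ψ.char
  have hG : G ≠ 0 := gaussSum_ne_zero_of_nontrivial hcard
    (fun h => hχ'2 (by rw [h, one_pow])) ψ.prim
  have hfrob : χ' q * G ^ q = G := by
    refine gaussSum_frob_of_pow_eq q hqF ?_ ψ.char
    rw [← Nat.div_add_mod q 4, hq4, pow_succ, pow_mul, hχ'4, one_pow, one_mul]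
  obtain ⟨t, ht⟩ : ∃ t, q = 4 * t + 1 := ⟨q / 4, by omega⟩
  have hGq : G ^ q = jacobiSum χ' χ' ^ (2 * t) * (Fintype.card F : L) ^ t * G := by
    rw [ht, pow_succ, pow_mul, gaussSum_pow_four hχ'4 hχ'2 ψ.prim, mul_pow, pow_mul]
  rw [hGq] at hfrob
  apply (algebraMap K L).injective
  simp only [map_mul, map_pow, map_natCast, map_one, ← jacobiSum_ringHomComp,
    ← MulChar.ringHomComp_apply]
  rw [show (q - 1) / 2 = 2 * t by omega, show (q - 1) / 4 = t by omega]
  exact mul_right_cancel₀ hG (by linear_combination hfrob)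

lemma quarticSym_mul_quarticSym_eq_quadraticChar_jacobiSum {p q : ℕ} [Fact p.Prime]
    [Fact q.Prime] (hne : p ≠ q) (hp4 : p % 4 = 1) (hq4 : q % 4 = 1) (hpq : legendreSym q p = 1)
    {χ : MulChar (ZMod p) ℤ[i]} {g : (ZMod p)ˣ} (hg : ∀ x, x ∈ Subgroup.zpowers g)
    (hχ : χ g = sqrtd) {i : ZMod q} (hi : i ^ 2 = -1) :
    quarticSym q p * quarticSym p q =
      quadraticChar (ZMod q) ((jacobiSum χ χ).re + (jacobiSum χ χ).im * i) := by
  have : Fact (2 < q) := ⟨by have := (Fact.out : q.Prime).two_le; omega⟩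
  have hp2 : ringChar (ZMod p) ≠ 2 := by rw [ZMod.ringChar_zmod_n]; omega
  have hq2 : ringChar (ZMod q) ≠ 2 := by rw [ZMod.ringChar_zmod_n]; omega
  let f : ℤ[i] →+* ZMod q := Zsqrtd.lift ⟨i, by rw [← sq, hi]; simp⟩
  set χq := χ.ringHomComp f
  have hχq : χq g ^ 2 = -1 := by simp [χq, hχ, f, hi]
  have key := mul_jacobiSum_pow_mul_card_pow_eq_one q hq4 (by rwa [ZMod.ringChar_zmod_n])
    (MulChar.pow_four_eq_one_of_apply_sq_eq_neg_one hg hχq)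
    (MulChar.sq_ne_one_of_apply_sq_eq_neg_one hq2 hχq)
  have hp0 := ZMod.prime_ne_zero q p hne.symm
  have hq0 := ZMod.prime_ne_zero p q hne
  obtain ⟨v, hv⟩ := (legendreSym.eq_one_iff' q hp0).mp hpq
  obtain ⟨u, hu⟩ := (legendreSym.eq_one_iff' p hq0).mp
    ((legendreSym.quadratic_reciprocity_one_mod_four hp4 (by omega)).symm.trans hpq)
  have hu0 : u ≠ 0 := by rintro rfl; exact hq0 (by rw [hu, mul_zero])
  have hv0 : v ≠ 0 := by rintro rfl; exact hp0 (by rw [hv, mul_zero])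
  set w : ZMod q := (jacobiSum χ χ).re + (jacobiSum χ χ).im * i
  have hχqq : χq q = quadraticChar (ZMod p) u := by
    rw [hu, ← sq, map_pow, ← MulChar.pow_apply' χq two_ne_zero,
      MulChar.sq_eq_quadraticChar_of_apply_sq_eq_neg_one hp2 hg hχq]
    simp
  have hJ : jacobiSum χq χq ^ ((q - 1) / 2) = quadraticChar (ZMod q) w := by
    rw [jacobiSum_ringHomComp, quadraticChar_eq_pow_of_char_ne_two' hq2, ZMod.card,
      show q / 2 = (q - 1) / 2 by omega]
    simp [f, w]
  have hcard : (Fintype.card (ZMod p) : ZMod q) ^ ((q - 1) / 4) = quadraticChar (ZMod q) v := by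
    rw [ZMod.card, hv, ← sq, ZMod.sq_pow_div_four_eq_quadraticChar hq4]
  rw [hχqq, hJ, hcard] at key
  have hw0 : w ≠ 0 := by rintro hw; simp [hw] at key
  rw [quarticSym_eq_quadraticChar hq4 hv0 (by rw [Int.cast_natCast, hv, sq]),
    quarticSym_eq_quadraticChar hp4 hu0 (by rw [Int.cast_natCast, hu, sq])]
  exact Int.mul_eq_of_intCast_mul_mul_eq_one (isUnit_quadraticChar hu0)
    (isUnit_quadraticChar hw0) (isUnit_quadraticChar hv0) (by exact_mod_cast key)

theorem quartic_reciprocity_gauss_form_general (p q : ℕ) [Fact p.Prime] [Fact q.Prime] (hne : p ≠ q)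
    (hp4 : p % 4 = 1) (hq4 : q % 4 = 1) (hpq : legendreSym q p = 1)
    (a b : ℤ) (hp : (p : ℤ) = a ^ 2 + b ^ 2) (ha : Odd a)
    (i : ZMod q) (hi : i ^ 2 = -1) :
    quarticSym q (p : ℤ) * quarticSym p (q : ℤ) =
      quadraticChar (ZMod q) ((a : ZMod q) + (b : ZMod q) * i) := by
  obtain ⟨χ, g, hg, hχg⟩ := GaussianInt.exists_mulChar_apply_generator_eq_sqrtd hp4
  have hχ : χ g ^ 2 = -1 := by rw [hχg, GaussianInt.sqrtd_sq]
  have hχ4 := MulChar.pow_four_eq_one_of_apply_sq_eq_neg_one hg hχ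
  have hχ2 := MulChar.sq_ne_one_of_apply_sq_eq_neg_one (by simp) hχ
  have hχ1 : χ ≠ 1 := by rintro rfl; exact hχ2 (one_pow 2)
  have hnorm := GaussianInt.norm_jacobiSum hχ1 hχ1 (by rwa [← sq])
  rw [ZMod.card, Zsqrtd.norm_def] at hnorm
  obtain ⟨-, heven⟩ := GaussianInt.jacobiSum_re_odd_im_even hχ4 hχ4 (by rw [ZMod.card]; omega)
  obtain ⟨hA, hB⟩ := Int.eq_or_eq_neg_of_sq_add_sq_eq_prime (A := (jacobiSum χ χ).re)
    (B := (jacobiSum χ χ).im) Fact.out hp.symm (by linear_combination hnorm) ha heven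
  rw [quarticSym_mul_quarticSym_eq_quadraticChar_jacobiSum hne hp4 hq4 hpq hg hχg hi]
  refine quadraticChar_add_mul_eq_of_eq_or_eq_neg (by rwa [ZMod.card]) hi
    (hA.imp (congrArg _) fun h => by rw [h, Int.cast_neg])
    (hB.imp (congrArg _) fun h => by rw [h, Int.cast_neg]) ?_
  rw [← hpq, legendreSym, hp]
  push_cast; rfl

/-- let `p ≡ q ≡ 1 (mod 4)` be distinct primes with `(p/q) = 1`,
`p = a² + b²` with `a` odd, `b` even, and `i` a square root of `−1` mod `q`.  Then
`(p/q)₄·(q/p)₄ = ((a + b·i)/q)`. -/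
theorem quartic_reciprocity_gauss_form (p q : ℕ) [Fact p.Prime] [Fact q.Prime] (hne : p ≠ q)
    (hp4 : p % 4 = 1) (hq4 : q % 4 = 1) (hpq : legendreSym q p = 1)
    (a b : ℤ) (hp : (p : ℤ) = a ^ 2 + b ^ 2) (ha : Odd a) (hb : Even b)
    (i : ZMod q) (hi : i ^ 2 = -1) :
    quarticSym q (p : ℤ) * quarticSym p (q : ℤ) =
      quadraticChar (ZMod q) ((a : ZMod q) + (b : ZMod q) * i) :=
  quartic_reciprocity_gauss_form_general p q hne hp4 hq4 hpq a b hp ha i hi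
end

section
/- Let p ≡ q ≡ 1 (mod 4) be distinct primes with (p/q) = 1, and suppose e, f, g are integers with e² = p·f² + q·g². Then (p/q)₄·(q/p)₄ = (−1)^(fg/2)·((−1)/e), under the normalization that one may swap p and q so that if p ≡ q ≡ 5 (mod 8) then f is even and g is odd, and if p ≢ q (mod 8) then p ≡ 5 and q ≡ 1 (mod 8). -/
theorem quarticSym_eq_legendreSym_of_pow_eq {q : ℕ} [Fact q.Prime] (hq : q ≠ 2) {m a : ℤ}
    (h : (m : ZMod q) ^ ((q - 1) / 4) = legendreSym q a) :
    quarticSym q m = legendreSym q a := by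
  have : Fact (2 < q) := ⟨(Fact.out : q.Prime).two_le.lt_of_ne' hq⟩
  rw [jacobiSym.legendreSym.to_jacobiSym] at h ⊢
  rcases jacobiSym.trichotomy a q with hJ | hJ | hJ <;> rw [hJ] at h ⊢ <;>
    simp [quarticSym, h, ZMod.neg_one_ne_one]

theorem quarticSym_eq_legendreSym_mul {q : ℕ} [Fact q.Prime] (hq4 : q % 4 = 1) {m x y : ℤ}
    (hy : (y : ZMod q) ≠ 0) (hm : (m : ZMod q) * (y : ZMod q) ^ 2 = (x : ZMod q) ^ 2) :
    quarticSym q m = legendreSym q (x * y) := by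
  refine quarticSym_eq_legendreSym_of_pow_eq (by omega) ?_
  have hsq : ∀ z : ℤ, ((z : ZMod q) ^ 2) ^ ((q - 1) / 4) = legendreSym q z := fun z => by
    rw [legendreSym.eq_pow, ← pow_mul]; congr 1; omega
  have hLy : (legendreSym q y : ZMod q) ^ 2 = 1 := by
    rcases legendreSym.eq_one_or_neg_one q hy with h | h <;> simp [h]
  calc (m : ZMod q) ^ ((q - 1) / 4)
      = (m : ZMod q) ^ ((q - 1) / 4) * (legendreSym q y : ZMod q) ^ 2 := by rw [hLy, mul_one]
    _ = ((x : ZMod q) ^ 2) ^ ((q - 1) / 4) * legendreSym q y := by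
        rw [← hm, mul_pow, hsq]; ring
    _ = legendreSym q (x * y) := by rw [hsq, legendreSym.mul]; push_cast; ring

theorem jacobiSym_eq_of_mul_sq_modEq {n k x y : ℤ} {m : ℕ} (hx : x.gcd m = 1) (hy : y.gcd m = 1)
    (h : n * y ^ 2 ≡ k * x ^ 2 [ZMOD m]) : jacobiSym n m = jacobiSym k m := by
  have := jacobiSym.mod_left' (b := m) h
  rwa [jacobiSym.mul_left, jacobiSym.mul_left, jacobiSym.sq_one' hx, jacobiSym.sq_one' hy,
    mul_one, mul_one] at this

theorem ZMod.χ₈_one_add_four_mul (β : ℕ) : χ₈ (1 + 4 * β : ZMod 8) = (-1) ^ β := by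
  rcases Nat.even_or_odd' β with ⟨u, rfl | rfl⟩
  · have : (1 + 4 * (2 * u : ℕ) : ZMod 8) = 1 := by
      push_cast; ring_nf; rw [show (8 : ZMod 8) = 0 from rfl]; ring
    rw [this, pow_mul]; simp
  · have : (1 + 4 * (2 * u + 1 : ℕ) : ZMod 8) = 5 := by
      push_cast; ring_nf; rw [show (8 : ZMod 8) = 0 from rfl]; ring
    rw [this, pow_succ, pow_mul]; simp

namespace PellForm

variable {p q a b c : ℕ}

theorem prime_not_dvd (hp : p.Prime) (hq : q.Prime) (hne : p ≠ q)
    (h : a ^ 2 = p * b ^ 2 + q * c ^ 2) (hg : a.gcd (b.gcd c) = 1) : ¬ q ∣ a := by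
  intro hqa
  have hqb : q ∣ b := by
    have : q ∣ p * b ^ 2 := (Nat.dvd_add_left (dvd_mul_right q _)).mp (h ▸ dvd_pow hqa two_ne_zero)
    rcases hq.dvd_mul.mp this with hqp | hqb
    · exact absurd ((Nat.prime_dvd_prime_iff_eq hq hp).mp hqp).symm hne
    · exact hq.dvd_of_dvd_pow hqb
  have hqc : q ∣ c := by
    have : q * q ∣ q * c ^ 2 := by
      have : q * c ^ 2 = a ^ 2 - p * b ^ 2 := by omega
      rw [this, ← pow_two]
      exact Nat.dvd_sub (pow_dvd_pow_of_dvd hqa 2) ((pow_dvd_pow_of_dvd hqb 2).mul_left p)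
    exact hq.dvd_of_dvd_pow (Nat.dvd_of_mul_dvd_mul_left hq.pos this)
  exact hq.one_lt.ne' (Nat.dvd_one.mp (hg ▸ Nat.dvd_gcd hqa (Nat.dvd_gcd hqb hqc)))

theorem coprime_ab (hp : p.Prime) (hq : q.Prime) (hne : p ≠ q)
    (h : a ^ 2 = p * b ^ 2 + q * c ^ 2) (hg : a.gcd (b.gcd c) = 1) : a.Coprime b := by
  refine Nat.coprime_of_dvd fun r hr hra hrb => ?_
  have : r ∣ q * c ^ 2 := by
    have : q * c ^ 2 = a ^ 2 - p * b ^ 2 := by omega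
    rw [this]
    exact Nat.dvd_sub (dvd_pow hra two_ne_zero) ((dvd_pow hrb two_ne_zero).mul_left p)
  rcases hr.dvd_mul.mp this with hrq | hrc
  · rw [(Nat.prime_dvd_prime_iff_eq hr hq).mp hrq] at hra
    exact prime_not_dvd hp hq hne h hg hra
  · have := Nat.dvd_gcd hra (Nat.dvd_gcd hrb (hr.dvd_of_dvd_pow hrc))
    exact hr.one_lt.ne' (Nat.dvd_one.mp (hg ▸ this))

theorem coprime_bc (h : a ^ 2 = p * b ^ 2 + q * c ^ 2) (hg : a.gcd (b.gcd c) = 1) :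
    b.Coprime c := by
  refine Nat.coprime_of_dvd fun r hr hrb hrc => ?_
  have hra : r ∣ a := hr.dvd_of_dvd_pow (h ▸ dvd_add ((dvd_pow hrb two_ne_zero).mul_left p)
    ((dvd_pow hrc two_ne_zero).mul_left q))
  exact hr.one_lt.ne' (Nat.dvd_one.mp (hg ▸ Nat.dvd_gcd hra (Nat.dvd_gcd hrb hrc)))

theorem even_or_even (hp4 : p % 4 = 1) (hq4 : q % 4 = 1) (h : a ^ 2 = p * b ^ 2 + q * c ^ 2) :
    Even b ∨ Even c := by
  by_contra! hbc
  obtain ⟨hb, hc⟩ : Odd b ∧ Odd c := by simpa using hbc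
  obtain ⟨s, rfl⟩ := hb
  obtain ⟨t, rfl⟩ := hc
  have h4 := congrArg (fun n : ℕ => (n : ZMod 4)) h
  simp only [Nat.cast_add, Nat.cast_mul, Nat.cast_pow, Nat.cast_one, Nat.cast_ofNat,
    ← ZMod.natCast_mod p, ← ZMod.natCast_mod q, hp4, hq4] at h4
  revert h4
  generalize (a : ZMod 4) = x
  generalize (s : ZMod 4) = y
  generalize (t : ZMod 4) = z
  revert x y z
  decide

theorem odd_and_odd_of_even (hq : Odd q) (h : a ^ 2 = p * b ^ 2 + q * c ^ 2)
    (hg : a.gcd (b.gcd c) = 1) (hb : Even b) : Odd a ∧ Odd c := by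
  have hc : Odd c := by
    refine Nat.not_even_iff_odd.mp fun hc => ?_
    have h2b := even_iff_two_dvd.mp hb
    have h2c := even_iff_two_dvd.mp hc
    have h2a : 2 ∣ a := Nat.prime_two.dvd_of_dvd_pow (h ▸ dvd_add
      ((dvd_pow h2b two_ne_zero).mul_left p) ((dvd_pow h2c two_ne_zero).mul_left q))
    exact absurd (hg ▸ Nat.dvd_gcd h2a (Nat.dvd_gcd h2b h2c)) (by decide)
  refine ⟨?_, hc⟩
  have : Odd (a ^ 2) := h ▸ ((hb.pow_of_ne_zero two_ne_zero).mul_left p).add_odd (hq.mul hc.pow)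
  exact (Nat.odd_pow_iff two_ne_zero).mp this

theorem χ₈_eq_neg_one_pow {β : ℕ} (hp : Odd p) (h : a ^ 2 = p * (2 * β) ^ 2 + q * c ^ 2)
    (ha : Odd a) (hc : Odd c) : ZMod.χ₈ q = (-1) ^ β := by
  obtain ⟨r, rfl⟩ := hp
  obtain ⟨s, rfl⟩ := ha
  obtain ⟨t, rfl⟩ := hc
  have h8 := congrArg (fun n : ℕ => (n : ZMod 8)) h
  push_cast at h8
  have hodd : ∀ x : ZMod 8, (2 * x + 1) ^ 2 = 1 := by decide
  have hp8 : ∀ x y : ZMod 8, (2 * x + 1) * (2 * y) ^ 2 = 4 * y := by decide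
  rw [hodd, hodd, hp8, mul_one] at h8
  have h80 : (8 : ZMod 8) = 0 := rfl
  have hq : (q : ZMod 8) = 1 + 4 * β := by linear_combination -h8 - (β : ZMod 8) * h80
  rw [hq, ZMod.χ₈_one_add_four_mul]

theorem jacobiSym_eq_one_of_dvd {n : ℕ} (hq4 : q % 4 = 1) (h : a ^ 2 = p * b ^ 2 + q * c ^ 2)
    (hn : Odd n) (hnb : n ∣ b) (hab : a.Coprime b) (hbc : b.Coprime c) : jacobiSym n q = 1 := by
  rw [← jacobiSym.quadratic_reciprocity_one_mod_four hq4 hn, ← jacobiSym.one_left n]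
  refine jacobiSym_eq_of_mul_sq_modEq (x := a) (y := c) ?_ ?_ ?_
  · exact Nat.Coprime.coprime_dvd_right hnb hab
  · exact Nat.Coprime.coprime_dvd_right hnb hbc.symm
  · obtain ⟨k, rfl⟩ := hnb
    refine Int.modEq_iff_dvd.mpr ⟨p * k * (n * k), ?_⟩
    linear_combination (by exact_mod_cast h : (a : ℤ) ^ 2 = p * (n * k) ^ 2 + q * c ^ 2)

theorem jacobiSym_eq_neg_one_pow (hp : Odd p) (hq4 : q % 4 = 1)
    (h : a ^ 2 = p * b ^ 2 + q * c ^ 2) (ha : Odd a) (hb : Even b) (hc : Odd c) (hb0 : b ≠ 0)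
    (hab : a.Coprime b) (hbc : b.Coprime c) : jacobiSym b q = (-1) ^ (b / 2) := by
  obtain ⟨k, m, hm, rfl⟩ := Nat.exists_eq_two_pow_mul_odd hb0
  have hJm : jacobiSym m q = 1 := jacobiSym_eq_one_of_dvd hq4 h hm (dvd_mul_left m _) hab hbc
  have hJb : jacobiSym (2 ^ k * m : ℕ) q = ZMod.χ₈ q ^ k := by
    push_cast
    rw [jacobiSym.mul_left, jacobiSym.pow_left, hJm, mul_one,
      jacobiSym.at_two (Nat.odd_iff.mpr (by omega))]
  obtain _ | j := k
  · exact absurd hb (by simpa using hm)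
  have hχ := χ₈_eq_neg_one_pow (q := q) (β := 2 ^ j * m) hp (by rw [h]; ring) ha hc
  have hhalf : 2 ^ (j + 1) * m / 2 = 2 ^ j * m := by
    rw [pow_succ', mul_assoc, Nat.mul_div_cancel_left _ two_pos]
  rw [hJb, hχ, hhalf]
  obtain _ | i := j
  · rw [pow_one]
  · rw [((Nat.even_pow.mpr ⟨even_two, i.succ_ne_zero⟩).mul_right m).neg_one_pow, one_pow]

theorem jacobiSym_mul_jacobiSym_eq (hp4 : p % 4 = 1) (hq4 : q % 4 = 1)
    (h : a ^ 2 = p * b ^ 2 + q * c ^ 2) (ha : Odd a) (hab : a.Coprime b) (hac : a.Coprime c)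
    (hqa : q.Coprime a) : jacobiSym a q * jacobiSym a p = jacobiSym (-1) a := by
  rw [← jacobiSym.quadratic_reciprocity_one_mod_four hq4 ha,
    ← jacobiSym.quadratic_reciprocity_one_mod_four hp4 ha, ← jacobiSym.mul_left]
  refine jacobiSym_eq_of_mul_sq_modEq (x := (q * c ^ 2 : ℕ)) (y := (b * c : ℕ)) ?_ ?_ ?_
  · exact Nat.Coprime.mul_left hqa (hac.symm.pow_left 2)
  · exact Nat.Coprime.mul_left hab.symm hac.symm
  · refine Int.modEq_iff_dvd.mpr ⟨-(q * c ^ 2 * a), ?_⟩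
    push_cast
    linear_combination ((q : ℤ) * c ^ 2) *
      (by exact_mod_cast h : (a : ℤ) ^ 2 = p * b ^ 2 + q * c ^ 2)

theorem quarticSym_eq_of_sq_eq [Fact q.Prime] (hq4 : q % 4 = 1)
    (h : a ^ 2 = p * b ^ 2 + q * c ^ 2) (hqa : ¬ q ∣ a) :
    quarticSym q p = legendreSym q (a * b) := by
  have ha : (a : ZMod q) ≠ 0 := by rwa [Ne, ZMod.natCast_eq_zero_iff]
  have hm : (p : ZMod q) * b ^ 2 = a ^ 2 := by
    simpa using (congrArg (fun n : ℕ => (n : ZMod q)) h).symm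
  refine quarticSym_eq_legendreSym_mul hq4 (fun hb => ha ?_) (by exact_mod_cast hm)
  have hb : (b : ZMod q) = 0 := by exact_mod_cast hb
  simpa [hb] using hm.symm

theorem quarticSym_mul_quarticSym_of_even [Fact p.Prime] [Fact q.Prime] (hne : p ≠ q)
    (hp4 : p % 4 = 1) (hq4 : q % 4 = 1) (h : a ^ 2 = p * b ^ 2 + q * c ^ 2)
    (hg : a.gcd (b.gcd c) = 1) (hb : Even b) :
    quarticSym q p * quarticSym p q = (-1) ^ (b * c / 2) * jacobiSym (-1) a := by
  have hp : p.Prime := Fact.out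
  have hq : q.Prime := Fact.out
  have h' : a ^ 2 = q * c ^ 2 + p * b ^ 2 := by rw [h, add_comm]
  have hg' : a.gcd (c.gcd b) = 1 := by rwa [Nat.gcd_comm c]
  obtain ⟨ha, hc⟩ := odd_and_odd_of_even (Nat.odd_iff.mpr (by omega)) h hg hb
  have hqa := prime_not_dvd hp hq hne h hg
  have hpa := prime_not_dvd hq hp hne.symm h' hg'
  have hab := coprime_ab hp hq hne h hg
  have hac := coprime_ab hq hp hne.symm h' hg'
  have hbc := coprime_bc h hg
  have hb0 : b ≠ 0 := by
    rintro rfl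
    exact hqa (hq.dvd_of_dvd_pow (n := 2) ⟨c ^ 2, by simpa using h⟩)
  have hq₄ : quarticSym q p = jacobiSym a q * jacobiSym b q := by
    rw [← jacobiSym.mul_left, ← jacobiSym.legendreSym.to_jacobiSym]
    exact_mod_cast quarticSym_eq_of_sq_eq hq4 h hqa
  have hp₄ : quarticSym p q = jacobiSym a p * jacobiSym c p := by
    rw [← jacobiSym.mul_left, ← jacobiSym.legendreSym.to_jacobiSym]
    exact_mod_cast quarticSym_eq_of_sq_eq hp4 h' hpa
  have hJa := jacobiSym_mul_jacobiSym_eq hp4 hq4 h ha hab hac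
    ((Nat.Prime.coprime_iff_not_dvd hq).mpr hqa)
  have hJb := jacobiSym_eq_neg_one_pow (Nat.odd_iff.mpr (by omega)) hq4 h ha hb hc hb0 hab hbc
  have hJc : jacobiSym c p = 1 := jacobiSym_eq_one_of_dvd hp4 h' hc dvd_rfl hac hbc.symm
  have hexp : (-1 : ℤ) ^ (b * c / 2) = (-1) ^ (b / 2) := by
    rw [← Nat.div_mul_right_comm (even_iff_two_dvd.mp hb), pow_mul', hc.neg_one_pow]
  calc quarticSym q p * quarticSym p q
      = (jacobiSym a q * jacobiSym a p) * jacobiSym b q * jacobiSym c p := by rw [hq₄, hp₄]; ring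
    _ = (-1) ^ (b * c / 2) * jacobiSym (-1) a := by rw [hJa, hJb, hJc, hexp]; ring

end PellForm

theorem quartic_reciprocity_pell_form_general (p q : ℕ) [Fact p.Prime] [Fact q.Prime] (hne : p ≠ q)
    (hp4 : p % 4 = 1) (hq4 : q % 4 = 1)
    (e f g : ℤ) (h : e ^ 2 = p * f ^ 2 + q * g ^ 2)
    (hgcd : Int.gcd e (Int.gcd f g) = 1) :
    quarticSym q (p : ℤ) * quarticSym p (q : ℤ) =
      (-1 : ℤ) ^ ((f * g) / 2).natAbs * jacobiSym (-1) e.natAbs := by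
  have hnat : e.natAbs ^ 2 = p * f.natAbs ^ 2 + q * g.natAbs ^ 2 := by
    have : (e.natAbs : ℤ) ^ 2 = p * (f.natAbs : ℤ) ^ 2 + q * (g.natAbs : ℤ) ^ 2 := by
      simpa only [Int.natAbs_pow_two] using h
    exact_mod_cast this
  have hexp (hfg : Even (f * g)) : ((f * g) / 2).natAbs = f.natAbs * g.natAbs / 2 := by
    rw [Int.natAbs_ediv_of_dvd (even_iff_two_dvd.mp hfg), Int.natAbs_mul]; rfl
  rcases PellForm.even_or_even hp4 hq4 hnat with hf | hg
  · rw [hexp ((Int.natAbs_even.mp hf).mul_right g)]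
    exact PellForm.quarticSym_mul_quarticSym_of_even hne hp4 hq4 hnat hgcd hf
  · rw [hexp ((Int.natAbs_even.mp hg).mul_left f), mul_comm (quarticSym q p),
      Nat.mul_comm f.natAbs]
    exact PellForm.quarticSym_mul_quarticSym_of_even hne.symm hq4 hp4 (by rw [hnat, add_comm])
      (by rwa [Nat.gcd_comm g.natAbs]) hg

/-- [L, Ex. 5.5]: let `p ≡ q ≡ 1 (mod 4)` be distinct primes with
`(p/q) = 1` and let `e, f, g` be integers with `e² = p f² + q g²`, `gcd(e,f,g) = 1`,
normalized (after possibly swapping `p` and `q`) so that if `p ≡ q ≡ 5 (mod 8)` then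
`f` is even and `g` odd, and if `p ≢ q (mod 8)` then `p ≡ 5`, `q ≡ 1 (mod 8)`.  Then
`(p/q)₄·(q/p)₄ = (−1)^(fg/2)·((−1)/e)`, the last symbol being the Jacobi symbol
`(−1 / |e|)` twisted by `sgn(e)` as in the paper. -/
theorem quartic_reciprocity_pell_form (p q : ℕ) [Fact p.Prime] [Fact q.Prime] (hne : p ≠ q)
    (hp4 : p % 4 = 1) (hq4 : q % 4 = 1) (hpq : legendreSym q p = 1)
    (e f g : ℤ) (h : e ^ 2 = p * f ^ 2 + q * g ^ 2)
    (hgcd : Int.gcd e (Int.gcd f g) = 1)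
    (hnorm1 : p % 8 = 5 ∧ q % 8 = 5 → Even f ∧ Odd g)
    (hnorm2 : p % 8 ≠ q % 8 → p % 8 = 5 ∧ q % 8 = 1) :
    quarticSym q (p : ℤ) * quarticSym p (q : ℤ) =
      (-1 : ℤ) ^ ((f * g) / 2).natAbs * jacobiSym (-1) e.natAbs :=
  quartic_reciprocity_pell_form_general p q hne hp4 hq4 e f g h hgcd
end

section
/- Let p ≡ q ≡ 1 (mod 4) be distinct primes with (p/q) = 1, and suppose p = r² + q·s² for integers r, s. Then (p/q)₄·(q/p)₄ = (2/q)^s. -/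
/-!
Reducing `p = r² + q s²` modulo `q` gives `(p/q)₄ = (r/q)`, and modulo `p` it gives
`q s² ≡ -r²`, hence `(q/p)₄ = (-1)^((p-1)/4) (r/p) (s/p) = (2/p) (r/p) (s/p)`. Exactly one of
`r`, `s` is even; write it as `2^a` times an odd number. By Jacobi reciprocity an odd divisor `m`
of `s` has `(m/p) = (r²/m) = 1` and an odd divisor `m` of `r` has `(m/p) = (q s²/m) = (m/q)`, so
only powers of `(2/p)` and `(2/q)` survive. They are evaluated modulo 8: adding `4^a k` to an odd
`n` multiplies `(2/n)` by `(-1)^(4^(a-1) k)`, which disappears in `(2/n)^(a+1)`.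
-/

open scoped NumberTheorySymbols

theorem quarticSym_eq_of_pow_eq {p : ℕ} (hp : 2 < p) {m e : ℤ} (he : e ^ 2 = 1)
    (h : (m : ZMod p) ^ ((p - 1) / 4) = e) : quarticSym p m = e := by
  have : Fact (2 < p) := ⟨hp⟩
  rcases sq_eq_one_iff.1 he with rfl | rfl <;> simp [quarticSym, h, ZMod.neg_one_ne_one]

theorem quarticSym_of_eq_sq {p : ℕ} [Fact p.Prime] (hp : p % 4 = 1) {m x : ℤ}
    (h : (m : ZMod p) = (x : ZMod p) ^ 2) (hx : (x : ZMod p) ≠ 0) :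
    quarticSym p m = legendreSym p x := by
  have : 2 < p := by have := (Fact.out : p.Prime).two_le; omega
  refine quarticSym_eq_of_pow_eq this (legendreSym.sq_one p hx) ?_
  rw [h, ← pow_mul, show 2 * ((p - 1) / 4) = p / 2 by omega, legendreSym.eq_pow]

theorem jacobiSym_two_of_mod_four {b : ℕ} (hb : b % 4 = 1) : J(2 | b) = (-1) ^ (b / 4) := by
  rw [jacobiSym.at_two (Nat.odd_iff.2 (by omega)), ZMod.χ₈_nat_eq_if_mod_eight]
  rcases Nat.even_or_odd (b / 4) with h | h <;> rw [h.neg_one_pow] <;> obtain ⟨k, hk⟩ := h <;>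
    split_ifs <;> omega

theorem quarticSym_of_mul_sq_eq_neg_sq {p : ℕ} [Fact p.Prime] (hp : p % 4 = 1) {m x y : ℤ}
    (h : (m : ZMod p) * (y : ZMod p) ^ 2 = -(x : ZMod p) ^ 2) (hx : (x : ZMod p) ≠ 0)
    (hy : (y : ZMod p) ≠ 0) :
    quarticSym p m = legendreSym p 2 * legendreSym p x * legendreSym p y := by
  have hp2 : 2 * ((p - 1) / 4) = p / 2 := by omega
  have hys : ((legendreSym p y : ℤ) : ZMod p) ^ 2 = 1 := by
    rw [← Int.cast_pow, legendreSym.sq_one p hy, Int.cast_one]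
  have hmy : (m : ZMod p) ^ ((p - 1) / 4) * legendreSym p y =
      (-1) ^ ((p - 1) / 4) * legendreSym p x := by
    rw [legendreSym.eq_pow, legendreSym.eq_pow, ← hp2, pow_mul, pow_mul, ← mul_pow, h, neg_pow]
  rw [jacobiSym.legendreSym.to_jacobiSym p 2, jacobiSym_two_of_mod_four hp,
    show p / 4 = (p - 1) / 4 by omega]
  refine quarticSym_eq_of_pow_eq (by have := (Fact.out : p.Prime).two_le; omega) ?_ ?_
  · rw [mul_pow, mul_pow, legendreSym.sq_one p hx, legendreSym.sq_one p hy, ← pow_mul,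
      pow_mul', neg_one_sq, one_pow, one_mul, one_mul]
  · push_cast
    linear_combination (legendreSym p y : ZMod p) * hmy - (m : ZMod p) ^ ((p - 1) / 4) * hys

theorem jacobiSym_two_sq {n : ℕ} (hn : Odd n) : J(2 | n) ^ 2 = 1 :=
  jacobiSym.sq_one (Nat.coprime_two_left.2 hn)

theorem jacobiSym_two_add_four_mul {n : ℕ} (hn : Odd n) (k : ℕ) :
    J(2 | n + 4 * k) = (-1) ^ k * J(2 | n) := by
  rw [jacobiSym.at_two hn, jacobiSym.at_two (hn.add_even ⟨2 * k, by ring⟩)]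
  obtain ⟨i, rfl⟩ := hn
  rcases Nat.even_or_odd k with hk | hk <;> rw [hk.neg_one_pow] <;> obtain ⟨j, rfl⟩ := hk <;>
    simp only [ZMod.χ₈_nat_eq_if_mod_eight] <;> split_ifs <;> omega

theorem jacobiSym_two_add_four_pow_mul_pow_succ {n a : ℕ} (hn : Odd n) (ha : a ≠ 0) (k : ℕ) :
    J(2 | n + 4 ^ a * k) ^ (a + 1) = J(2 | n) ^ (a + 1) := by
  obtain ⟨b, rfl⟩ := Nat.exists_eq_succ_of_ne_zero ha
  have heven : Even (4 ^ b * (b + 2)) := by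
    rcases Nat.eq_zero_or_pos b with rfl | hb
    · decide
    · exact (Nat.even_pow.2 ⟨by decide, hb.ne'⟩).mul_right _
  rw [show 4 ^ (b + 1) * k = 4 * (4 ^ b * k) by ring, jacobiSym_two_add_four_mul hn, mul_pow,
    ← pow_mul, show 4 ^ b * k * (b + 1 + 1) = 4 ^ b * (b + 2) * k by ring,
    (heven.mul_right k).neg_one_pow, one_mul]

theorem jacobiSym_eq_of_modEq_mul_sq {m n n' x : ℕ} (hm : Odd m) (hn : n % 4 = 1)
    (hn' : n' % 4 = 1) (hx : x.Coprime m) (h : n ≡ n' * x ^ 2 [MOD m]) :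
    J(m | n) = J(m | n') := by
  rw [← jacobiSym.quadratic_reciprocity_one_mod_four hn hm,
    ← jacobiSym.quadratic_reciprocity_one_mod_four hn' hm,
    jacobiSym.mod_left' (Int.natCast_modEq_iff.2 h), Nat.cast_mul, Nat.cast_pow,
    jacobiSym.mul_left, jacobiSym.sq_one' (a := x) hx, mul_one]

theorem jacobiSym_eq_one_of_modEq_sq {m n x : ℕ} (hm : Odd m) (hn : n % 4 = 1)
    (hx : x.Coprime m) (h : n ≡ x ^ 2 [MOD m]) : J(m | n) = 1 := by
  rw [jacobiSym_eq_of_modEq_mul_sq hm hn rfl hx (by rwa [one_mul]), jacobiSym.one_right]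

theorem odd_iff_even_of_eq_sq_add_mul_sq {n q R S : ℕ} (hn : Odd n) (hq : Odd q)
    (h : n = R ^ 2 + q * S ^ 2) : Odd R ↔ Even S := by
  have := Nat.not_even_iff_odd.2 hq
  subst h
  simpa [parity_simps, this, Nat.odd_pow_iff] using hn

theorem jacobiSym_prod_of_eq_sq_add_mul_sq_of_odd {p q R S : ℕ} (hp : p % 4 = 1)
    (hq : q % 4 = 1) (hRS : R.Coprime S) (hqR : q.Coprime R) (hR : R ≠ 0) (hS : Odd S)
    (h : p = R ^ 2 + q * S ^ 2) :
    J(R | q) * (J(2 | p) * J(R | p) * J(S | p)) = J(2 | q) := by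
  have hq2 : Odd q := Nat.odd_iff.2 (by omega)
  obtain ⟨a, u, hu, rfl⟩ := Nat.exists_eq_two_pow_mul_odd hR
  have ha : a ≠ 0 := by
    rintro rfl
    rw [pow_zero, one_mul] at h
    exact Nat.not_even_iff_odd.2 hS
      ((odd_iff_even_of_eq_sq_add_mul_sq (Nat.odd_iff.2 (by omega)) hq2 h).1 hu)
  have hSp : J(S | p) = 1 :=
    jacobiSym_eq_one_of_modEq_sq hS hp hRS (by simp [h, Nat.ModEq, sq S, ← mul_assoc])
  have hup : J(u | p) = J(u | q) := by
    refine jacobiSym_eq_of_modEq_mul_sq hu hp hq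
      (hRS.symm.coprime_dvd_right (dvd_mul_left u _)) ?_
    simp [h, Nat.ModEq, mul_pow, sq u, ← mul_assoc]
  have huq : J(u | q) ^ 2 = 1 :=
    jacobiSym.sq_one (a := u) (hqR.coprime_dvd_right (dvd_mul_left u _)).symm
  have h2p : J(2 | p) ^ (a + 1) = J(2 | q) ^ (a + 1) := by
    rw [h, add_comm, mul_pow, ← pow_mul, pow_mul', show 2 ^ 2 = 4 by rfl,
      jacobiSym_two_add_four_pow_mul_pow_succ (hq2.mul hS.pow) ha,
      jacobiSym.mul_right' _ hq2.pos.ne' hS.pow.pos.ne', jacobiSym.pow_right,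
      jacobiSym_two_sq hS, mul_one]
  push_cast
  rw [jacobiSym.mul_left, jacobiSym.mul_left, jacobiSym.pow_left, jacobiSym.pow_left, hSp, hup]
  calc J(2 | q) ^ a * J(u | q) * (J(2 | p) * (J(2 | p) ^ a * J(u | q)) * 1)
      = J(2 | q) ^ a * J(2 | p) ^ (a + 1) * J(u | q) ^ 2 := by ring
    _ = (J(2 | q) ^ 2) ^ a * J(2 | q) * J(u | q) ^ 2 := by rw [h2p]; ring
    _ = J(2 | q) := by rw [jacobiSym_two_sq hq2, huq]; ring

theorem jacobiSym_prod_of_eq_sq_add_mul_sq_of_even {p q R S : ℕ} (hp : p % 4 = 1)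
    (hq : q % 4 = 1) (hRS : R.Coprime S) (hqR : q.Coprime R) (hS : S ≠ 0) (hS2 : Even S)
    (h : p = R ^ 2 + q * S ^ 2) :
    J(R | q) * (J(2 | p) * J(R | p) * J(S | p)) = 1 := by
  have hR : Odd R := (odd_iff_even_of_eq_sq_add_mul_sq (Nat.odd_iff.2 (by omega))
    (Nat.odd_iff.2 (by omega)) h).2 hS2
  obtain ⟨b, t, ht, rfl⟩ := Nat.exists_eq_two_pow_mul_odd hS
  have hb : b ≠ 0 := by
    rintro rfl
    rw [pow_zero, one_mul] at hS2
    exact Nat.not_even_iff_odd.2 ht hS2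
  have hRp : J(R | p) = J(R | q) := by
    refine jacobiSym_eq_of_modEq_mul_sq hR hp hq hRS.symm ?_
    simp [h, Nat.ModEq, sq R]
  have htp : J(t | p) = 1 := by
    refine jacobiSym_eq_one_of_modEq_sq ht hp (hRS.coprime_dvd_right (dvd_mul_left t _)) ?_
    simp [h, Nat.ModEq, mul_pow, sq t, ← mul_assoc]
  have h2p : J(2 | p) ^ (b + 1) = 1 := by
    rw [h, mul_pow, ← pow_mul, pow_mul', show 2 ^ 2 = 4 by rfl, mul_left_comm,
      jacobiSym_two_add_four_pow_mul_pow_succ hR.pow hb, jacobiSym.pow_right, jacobiSym_two_sq hR,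
      one_pow]
  push_cast
  rw [jacobiSym.mul_left, jacobiSym.pow_left, hRp, htp]
  calc J(R | q) * (J(2 | p) * J(R | q) * (J(2 | p) ^ b * 1))
      = J(R | q) ^ 2 * J(2 | p) ^ (b + 1) := by ring
    _ = 1 := by rw [jacobiSym.sq_one (a := R) hqR.symm, h2p, one_mul]

theorem jacobiSym_prod_of_eq_sq_add_mul_sq {p q R S : ℕ} (hp : p % 4 = 1) (hq : q % 4 = 1)
    (hRS : R.Coprime S) (hqR : q.Coprime R) (hR : R ≠ 0) (hS : S ≠ 0)
    (h : p = R ^ 2 + q * S ^ 2) :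
    J(R | q) * (J(2 | p) * J(R | p) * J(S | p)) = J(2 | q) ^ S := by
  have h2q := jacobiSym_two_sq (n := q) (Nat.odd_iff.2 (by omega))
  rcases Nat.even_or_odd S with ⟨k, rfl⟩ | ⟨k, rfl⟩
  · rw [jacobiSym_prod_of_eq_sq_add_mul_sq_of_even hp hq hRS hqR hS ⟨k, rfl⟩ h, ← two_mul,
      pow_mul, h2q, one_pow]
  · rw [jacobiSym_prod_of_eq_sq_add_mul_sq_of_odd hp hq hRS hqR hR ⟨k, rfl⟩ h, pow_succ,
      pow_mul, h2q, one_pow, one_mul]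

theorem Nat.coprime_of_squarefree_sq_add_mul_sq {R S c : ℕ}
    (h : Squarefree (R ^ 2 + c * S ^ 2)) : R.Coprime S :=
  Nat.isUnit_iff.1 <| h _ <| dvd_add
    (sq R ▸ mul_dvd_mul (Nat.gcd_dvd_left R S) (Nat.gcd_dvd_left R S))
    ((sq S ▸ mul_dvd_mul (Nat.gcd_dvd_right R S) (Nat.gcd_dvd_right R S)).mul_left c)

theorem ZMod.natCast_ne_zero_of_sq_add_mul_sq_eq_zero {ℓ : ℕ} [Fact ℓ.Prime] {R S c : ℕ}
    (hRS : R.Coprime S) (hc : (c : ZMod ℓ) ≠ 0) (h : (R : ZMod ℓ) ^ 2 + c * S ^ 2 = 0) :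
    (R : ZMod ℓ) ≠ 0 ∧ (S : ZMod ℓ) ≠ 0 := by
  have hboth : ¬((R : ZMod ℓ) = 0 ∧ (S : ZMod ℓ) = 0) := by
    simp only [ZMod.natCast_eq_zero_iff]
    exact fun ⟨hR, hS⟩ =>
      (Fact.out : ℓ.Prime).one_lt.ne' (Nat.eq_one_of_dvd_coprimes hRS hR hS)
  have hiff : (R : ZMod ℓ) = 0 ↔ (S : ZMod ℓ) = 0 := by
    constructor <;> intro h0 <;> simp_all
  tauto

theorem quartic_reciprocity_rep_form_general (p q : ℕ) [Fact p.Prime] [Fact q.Prime] (hne : p ≠ q)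
    (hp4 : p % 4 = 1) (hq4 : q % 4 = 1)
    (r s : ℤ) (h : (p : ℤ) = r ^ 2 + q * s ^ 2) :
    quarticSym q (p : ℤ) * quarticSym p (q : ℤ) = (legendreSym q 2) ^ s.natAbs := by
  have hp : p.Prime := Fact.out
  have hq : q.Prime := Fact.out
  have hN : p = r.natAbs ^ 2 + q * s.natAbs ^ 2 := by
    zify
    rwa [sq_abs, sq_abs]
  generalize r.natAbs = R, s.natAbs = S at hN
  have hRS := Nat.coprime_of_squarefree_sq_add_mul_sq (hN ▸ hp.prime.squarefree)
  have hN_q : (p : ZMod q) = (R : ZMod q) ^ 2 := by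
    simpa using congrArg (Nat.cast : ℕ → ZMod q) hN
  have hN_p : (R : ZMod p) ^ 2 + q * S ^ 2 = 0 := by
    simpa using (congrArg (Nat.cast : ℕ → ZMod p) hN).symm
  have hpq : (p : ZMod q) ≠ 0 := by
    rw [Ne, ZMod.natCast_eq_zero_iff, Nat.prime_dvd_prime_iff_eq hq hp]; exact hne.symm
  have hqp : (q : ZMod p) ≠ 0 := by
    rw [Ne, ZMod.natCast_eq_zero_iff, Nat.prime_dvd_prime_iff_eq hp hq]; exact hne
  have hRq : (R : ZMod q) ≠ 0 := fun h0 => hpq (by rw [hN_q, h0, zero_pow two_ne_zero])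
  obtain ⟨hRp, hSp⟩ := ZMod.natCast_ne_zero_of_sq_add_mul_sq_eq_zero hRS hqp hN_p
  rw [quarticSym_of_eq_sq hq4 (x := R) (by simpa using hN_q) (by simpa using hRq),
    quarticSym_of_mul_sq_eq_neg_sq hp4 (x := R) (y := S) (by push_cast; linear_combination hN_p)
      (by simpa using hRp) (by simpa using hSp)]
  have hqR : q.Coprime R := hq.coprime_iff_not_dvd.2 (by rwa [← ZMod.natCast_eq_zero_iff])
  simp only [jacobiSym.legendreSym.to_jacobiSym]
  exact jacobiSym_prod_of_eq_sq_add_mul_sq hp4 hq4 hRS hqR (by rintro rfl; simp at hRq)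
    (by rintro rfl; simp at hSp) hN

/-- [L, Ex. 5.6]: let `p ≡ q ≡ 1 (mod 4)` be distinct primes with
`(p/q) = 1` and suppose `p = r² + q s²`.  Then `(p/q)₄·(q/p)₄ = (2/q)^s`. -/
theorem quartic_reciprocity_rep_form (p q : ℕ) [Fact p.Prime] [Fact q.Prime] (hne : p ≠ q)
    (hp4 : p % 4 = 1) (hq4 : q % 4 = 1) (hpq : legendreSym q p = 1)
    (r s : ℤ) (h : (p : ℤ) = r ^ 2 + q * s ^ 2) :
    quarticSym q (p : ℤ) * quarticSym p (q : ℤ) = (legendreSym q 2) ^ s.natAbs :=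
  quartic_reciprocity_rep_form_general p q hne hp4 hq4 r s h
end

section
/- Suppose p, q, r, s, a, b, c, d are distinct odd primes with p ≡ q ≡ r ≡ s ≡ 1 (mod 4), (a/p) = (b/p) = (c/p) = (d/p) = (a/q) = (d/q) = (b/r) = (d/r) = (c/s) = (d/s) = −1 and (b/q) = (c/q) = (a/r) = (c/r) = (a/s) = (b/s) = 1. Then the product (ad/pq)₄ · (bd/pr)₄ · (cd/ps)₄ · (a/rs)₄ · (b/qs)₄ · (c/qr)₄ · (abcd/pqrs)₄ equals −1, where for n with (n/t) = 1 for all primes t | m, (n/m)₄ := ∏_{t | m} (n/t)₄ is the rational quartic residue symbol (product of quartic symbols over prime divisors t of m). -/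
section QuarticSym

variable {t : ℕ}

theorem quarticSym_eq_of_pow_eq_s18 (ht : 2 < t) {m ε : ℤ} (hε : ε = 1 ∨ ε = -1)
    (h : (m : ZMod t) ^ ((t - 1) / 4) = ε) : quarticSym t m = ε := by
  have : Fact (2 < t) := ⟨ht⟩
  rcases hε with rfl | rfl
  · simp_all [quarticSym]
  · simp_all [quarticSym, ZMod.neg_one_ne_one]

variable [Fact t.Prime]

theorem two_lt_of_mod_four_eq_one (ht : t % 4 = 1) : 2 < t := by
  have := (Fact.out : t.Prime).two_le
  omega

theorem sq_pow_div_four (ht : t % 4 = 1) (m : ℤ) :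
    ((m : ZMod t) ^ ((t - 1) / 4)) ^ 2 = legendreSym t m := by
  rw [legendreSym.eq_pow, ← pow_mul]
  congr 1
  omega

theorem pow_div_four_eq_one_or_neg_one (ht : t % 4 = 1) {m : ℤ} (hm : legendreSym t m = 1) :
    (m : ZMod t) ^ ((t - 1) / 4) = 1 ∨ (m : ZMod t) ^ ((t - 1) / 4) = -1 := by
  rw [← sq_eq_one_iff, sq_pow_div_four ht, hm, Int.cast_one]

theorem quarticSym_eq_one_or_neg_one (ht : t % 4 = 1) {m : ℤ} (hm : legendreSym t m = 1) :
    quarticSym t m = 1 ∨ quarticSym t m = -1 := by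
  have ht2 := two_lt_of_mod_four_eq_one ht
  rcases pow_div_four_eq_one_or_neg_one ht hm with h | h
  · exact Or.inl (quarticSym_eq_of_pow_eq_s18 ht2 (Or.inl rfl) (by simpa))
  · exact Or.inr (quarticSym_eq_of_pow_eq_s18 ht2 (Or.inr rfl) (by simpa))

theorem intCast_quarticSym (ht : t % 4 = 1) {m : ℤ} (hm : legendreSym t m = 1) :
    (quarticSym t m : ZMod t) = (m : ZMod t) ^ ((t - 1) / 4) := by
  have ht2 := two_lt_of_mod_four_eq_one ht
  rcases pow_div_four_eq_one_or_neg_one ht hm with h | h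
  · rw [h, quarticSym_eq_of_pow_eq_s18 (ε := 1) ht2 (Or.inl rfl) (by simpa), Int.cast_one]
  · rw [h, quarticSym_eq_of_pow_eq_s18 (ε := -1) ht2 (Or.inr rfl) (by simpa), Int.cast_neg,
      Int.cast_one]

theorem quarticSym_mul (ht : t % 4 = 1) {m n : ℤ} (hm : legendreSym t m = 1)
    (hn : legendreSym t n = 1) : quarticSym t (m * n) = quarticSym t m * quarticSym t n := by
  refine quarticSym_eq_of_pow_eq_s18 (two_lt_of_mod_four_eq_one ht) ?_ ?_
  · rcases quarticSym_eq_one_or_neg_one ht hm with h | h <;>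
      rcases quarticSym_eq_one_or_neg_one ht hn with h' | h' <;> simp [h, h']
  · push_cast [intCast_quarticSym ht hm, intCast_quarticSym ht hn]
    exact mul_pow _ _ _

theorem quarticSym_sq (ht : t % 4 = 1) (w : ℤ) : quarticSym t (w ^ 2) = legendreSym t w := by
  by_cases hw : (w : ZMod t) = 0
  · have hk : (t - 1) / 4 ≠ 0 := by have := two_lt_of_mod_four_eq_one ht; omega
    simp [quarticSym, hw, (legendreSym.eq_zero_iff t w).mpr hw, hk]
  · refine quarticSym_eq_of_pow_eq_s18 (two_lt_of_mod_four_eq_one ht)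
      (legendreSym.eq_one_or_neg_one t hw) ?_
    rw [Int.cast_pow, pow_right_comm, sq_pow_div_four ht]

theorem quarticSym_list_prod (ht : t % 4 = 1) {l : List ℤ}
    (hl : ∀ m ∈ l, legendreSym t m = 1) :
    quarticSym t l.prod = (l.map (quarticSym t)).prod := by
  induction l with
  | nil => exact quarticSym_eq_of_pow_eq_s18 (two_lt_of_mod_four_eq_one ht) (Or.inl rfl) (by simp)
  | cons m l ih =>
    rw [List.forall_mem_cons] at hl
    have hprod : legendreSym t l.prod = 1 := by
      simpa using (map_list_prod (legendreSym.hom t) l).trans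
        (List.prod_eq_one (by simpa using hl.2))
    rw [List.prod_cons, quarticSym_mul ht hl.1 hprod, ih hl.2, List.map_cons, List.prod_cons]

theorem list_prod_quarticSym_eq_legendreSym (ht : t % 4 = 1) {l : List ℤ}
    (hl : ∀ m ∈ l, legendreSym t m = 1) {w : ℤ} (hw : l.prod = w ^ 2) :
    (l.map (quarticSym t)).prod = legendreSym t w := by
  rw [← quarticSym_list_prod ht hl, hw, quarticSym_sq ht]

end QuarticSym

theorem example_product_minus_one_general (p q r s a b c d : ℕ)
    [Fact p.Prime] [Fact q.Prime] [Fact r.Prime] [Fact s.Prime]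
    (h1 : p % 4 = 1) (h2 : q % 4 = 1) (h3 : r % 4 = 1) (h4 : s % 4 = 1)
    (hap : legendreSym p a = -1) (hbp : legendreSym p b = -1)
    (hcp : legendreSym p c = -1) (hdp : legendreSym p d = -1)
    (haq : legendreSym q a = -1) (hdq : legendreSym q d = -1)
    (hbr : legendreSym r b = -1) (hdr : legendreSym r d = -1)
    (hcs : legendreSym s c = -1) (hds : legendreSym s d = -1)
    (hbq : legendreSym q b = 1) (hcq : legendreSym q c = 1)
    (har : legendreSym r a = 1) (hcr : legendreSym r c = 1)
    (has : legendreSym s a = 1) (hbs : legendreSym s b = 1) :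
    (quarticSym p (a * d) * quarticSym q (a * d)) *
      (quarticSym p (b * d) * quarticSym r (b * d)) *
      (quarticSym p (c * d) * quarticSym s (c * d)) *
      (quarticSym r (a : ℤ) * quarticSym s (a : ℤ)) *
      (quarticSym q (b : ℤ) * quarticSym s (b : ℤ)) *
      (quarticSym q (c : ℤ) * quarticSym r (c : ℤ)) *
      (quarticSym p (a * b * c * d) * quarticSym q (a * b * c * d) *
        quarticSym r (a * b * c * d) * quarticSym s (a * b * c * d)) = -1 := by
  have hp := list_prod_quarticSym_eq_legendreSym h1 (l := [a * d, b * d, c * d, a * b * c * d])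
    (w := a * b * c * d ^ 2) (by simp [legendreSym.mul, hap, hbp, hcp, hdp]) (by simp; ring)
  have hq := list_prod_quarticSym_eq_legendreSym h2 (l := [a * d, b, c, a * b * c * d])
    (w := a * b * c * d) (by simp [legendreSym.mul, haq, hbq, hcq, hdq]) (by simp; ring)
  have hr := list_prod_quarticSym_eq_legendreSym h3 (l := [b * d, a, c, a * b * c * d])
    (w := a * b * c * d) (by simp [legendreSym.mul, har, hbr, hcr, hdr]) (by simp; ring)
  have hs := list_prod_quarticSym_eq_legendreSym h4 (l := [c * d, a, b, a * b * c * d])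
    (w := a * b * c * d) (by simp [legendreSym.mul, has, hbs, hcs, hds]) (by simp; ring)
  simp only [List.map_cons, List.map_nil, List.prod_cons, List.prod_nil, legendreSym.mul,
    pow_two, hap, hbp, hcp, hdp, haq, hbq, hcq, hdq, har, hbr, hcr, hdr, has, hbs, hcs, hds]
    at hp hq hr hs
  -- the goal is the product of `hp`, `hq`, `hr`, `hs`, regrouped by prime
  grind

/-- Example 2.8: for distinct odd primes `p, q, r, s, a, b, c, d` with
`p ≡ q ≡ r ≡ s ≡ 1 (mod 4)` and the indicated Legendre symbol values, the product of
rational quartic residue symbols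
`(ad/pq)₄·(bd/pr)₄·(cd/ps)₄·(a/rs)₄·(b/qs)₄·(c/qr)₄·(abcd/pqrs)₄` equals `−1`,
where `(n/m)₄ = ∏_{t ∣ m} (n/t)₄` over the prime divisors `t` of `m`. -/
theorem example_product_minus_one (p q r s a b c d : ℕ)
    [Fact p.Prime] [Fact q.Prime] [Fact r.Prime] [Fact s.Prime]
    [Fact a.Prime] [Fact b.Prime] [Fact c.Prime] [Fact d.Prime]
    (hodd : p ≠ 2 ∧ q ≠ 2 ∧ r ≠ 2 ∧ s ≠ 2 ∧ a ≠ 2 ∧ b ≠ 2 ∧ c ≠ 2 ∧ d ≠ 2)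
    (hdist : List.Pairwise (· ≠ ·) [p, q, r, s, a, b, c, d])
    (h1 : p % 4 = 1) (h2 : q % 4 = 1) (h3 : r % 4 = 1) (h4 : s % 4 = 1)
    (hap : legendreSym p a = -1) (hbp : legendreSym p b = -1)
    (hcp : legendreSym p c = -1) (hdp : legendreSym p d = -1)
    (haq : legendreSym q a = -1) (hdq : legendreSym q d = -1)
    (hbr : legendreSym r b = -1) (hdr : legendreSym r d = -1)
    (hcs : legendreSym s c = -1) (hds : legendreSym s d = -1)
    (hbq : legendreSym q b = 1) (hcq : legendreSym q c = 1)
    (har : legendreSym r a = 1) (hcr : legendreSym r c = 1)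
    (has : legendreSym s a = 1) (hbs : legendreSym s b = 1) :
    (quarticSym p (a * d) * quarticSym q (a * d)) *
      (quarticSym p (b * d) * quarticSym r (b * d)) *
      (quarticSym p (c * d) * quarticSym s (c * d)) *
      (quarticSym r (a : ℤ) * quarticSym s (a : ℤ)) *
      (quarticSym q (b : ℤ) * quarticSym s (b : ℤ)) *
      (quarticSym q (c : ℤ) * quarticSym r (c : ℤ)) *
      (quarticSym p (a * b * c * d) * quarticSym q (a * b * c * d) *
        quarticSym r (a * b * c * d) * quarticSym s (a * b * c * d)) = -1 :=
  example_product_minus_one_general p q r s a b c d h1 h2 h3 h4 hap hbp hcp hdp haq hdq hbr hdr hcs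
    hds hbq hcq har hcr has hbs
end
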